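/- arXiv:0710.0652 — 5 statements merged into one kernel-verified Lean document; each statement's English description precedes it below -/
import Mathlib

section
/- Let F = {k_{ij} : 1 ≤ i ≤ j ≤ r} be a Littlewood–Richardson filling of the skew shape λ/μ with content ν. Define the r×r matrices M = diag(t^{μ_1},…,t^{μ_r}) and, for 1 ≤ i ≤ r, N_i = block-diag(1_{i−1}, T_i), where 1_{i−1} is the (i−1)×(i−1) identity matrix and T_i is the (r−i+1)×(r−i+1) upper bidiagonal matrix with diagonal entries t^{k_{i,i}}, t^{k_{i,i+1}}, …, t^{k_{i,r}} and all superdiagonal entries equal to 1. Then: inv(M) = μ; inv(N_1·N_2⋯N_i) = (ν_1, ν_2, …, ν_i, 0, …, 0) for all 1 ≤ i ≤ r; and inv(M·N_1·N_2⋯N_i) = λ^{(i)} for all 1 ≤ i ≤ r, where λ^{(i)}_j := μ_j + k_{1j} + k_{2j} + ⋯ + k_{min(i,j),j}. -/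
open Matrix

section Defs

variable {R : Type*} [CommRing R]

/-- The order `‖a‖` of `a ∈ R` with respect to a uniformizing parameter `t`:
the number of times `t` divides `a`, with `‖0‖ = ∞`. Valued in `ℕ∞`. -/
noncomputable def ord (t a : R) : ℕ∞ := emultiplicity t a

/-- The order of `a` as an integer (junk value `0` when the order is not finite). -/
noncomputable def ordZ (t a : R) : ℤ := multiplicity t a

/-- `D_μ = diag(t^{μ_1}, …, t^{μ_r})` for a 1-indexed tuple `μ : ℕ → ℕ`. -/
noncomputable def Dmu (t : R) (r : ℕ) (μ : ℕ → ℕ) : Matrix (Fin r) (Fin r) R :=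
  Matrix.diagonal fun i => t ^ μ (i.1 + 1)

/-- Upper triangular matrix. -/
def UpperTri {r : ℕ} (M : Matrix (Fin r) (Fin r) R) : Prop := ∀ i j : Fin r, j < i → M i j = 0

/-- Lower triangular matrix. -/
def LowerTri {r : ℕ} (M : Matrix (Fin r) (Fin r) R) : Prop := ∀ i j : Fin r, i < j → M i j = 0

/-- `Q ∈ GL_r(R)` is `μ`-admissible iff `D_μ · Q · D_μ⁻¹` has all entries in `R`,
i.e. `D_μ · Q = P · D_μ` for some matrix `P` over `R`. -/
def MuAdmissible (t : R) (r : ℕ) (μ : ℕ → ℕ) (Q : Matrix (Fin r) (Fin r) R) : Prop :=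
  IsUnit Q.det ∧ ∃ P : Matrix (Fin r) (Fin r) R, Dmu t r μ * Q = P * Dmu t r μ

/-- `inv(M) = μ`: the (1-indexed, non-increasing) invariant partition of `M`,
given by the Smith normal form `P · M · Q⁻¹ = D_μ` with `P, Q ∈ GL_r(R)`. -/
def SmithInv (t : R) (r : ℕ) (M : Matrix (Fin r) (Fin r) R) (μ : ℕ → ℕ) : Prop :=
  (∀ i, 1 ≤ i → i < r → μ (i + 1) ≤ μ i) ∧
  ∃ P Q : Matrix (Fin r) (Fin r) R, IsUnit P.det ∧ IsUnit Q.det ∧ P * M * Q = Dmu t r μ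

/-- Pair equivalence: `(M', N') = (P·M·Q⁻¹, Q·N·T⁻¹)` for some `P, Q, T ∈ GL_r(R)`. -/
def PairEquiv {r : ℕ} (M N M' N' : Matrix (Fin r) (Fin r) R) : Prop :=
  ∃ P Q T : Matrix (Fin r) (Fin r) R, IsUnit P.det ∧ IsUnit Q.det ∧ IsUnit T.det ∧
    P * M = M' * Q ∧ Q * N = N' * T

/-- `|μ_I|` for an index set `I` (1-indexed partition `μ`, 0-indexed `Fin`). -/
def wt (r : ℕ) (μ : ℕ → ℕ) {k : ℕ} (I : Fin k → Fin r) : ℕ := ∑ s, μ ((I s).1 + 1)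

/-- The columns `r-s+1, …, r` (the last `s` columns), 0-indexed. -/
def lastCols (r s : ℕ) (h : s ≤ r) : Fin s → Fin r :=
  fun p => ⟨r - s + p.1, by have := p.isLt; omega⟩

/-- The rows `1, …, s` (the first `s` rows), 0-indexed. -/
def firstRows (r s : ℕ) (h : s ≤ r) : Fin s → Fin r :=
  fun p => ⟨p.1, lt_of_lt_of_le p.isLt h⟩

/-- The set of (1-indexed) rows `{1,…,a} ∪ {b,…,r}`, as a `Finset (Fin r)`. -/
def rowsSet (r a b : ℕ) : Finset (Fin r) :=
  Finset.univ.filter fun x => x.1 + 1 ≤ a ∨ b ≤ x.1 + 1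

/-- The minor of `W` using the rows in the `Finset` `s` (in increasing order) and the
last `s.card` columns. -/
noncomputable def rsMinor {r : ℕ} (W : Matrix (Fin r) (Fin r) R) (s : Finset (Fin r)) : R :=
  (W.submatrix (fun p : Fin s.card => s.orderEmbOfFin rfl p)
    (lastCols r s.card (by simpa using s.card_le_univ))).det

/-- Order (in `ℕ∞`) of the minor of `W` with rows `{1,…,a} ∪ {b,…,r}` and right-justified
columns. -/
noncomputable def dMinor (t : R) {r : ℕ} (W : Matrix (Fin r) (Fin r) R) (a b : ℕ) : ℕ∞ :=
  ord t (rsMinor W (rowsSet r a b))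

/-- Integer-valued version of `dMinor`. -/
noncomputable def dMinorZ (t : R) {r : ℕ} (W : Matrix (Fin r) (Fin r) R) (a b : ℕ) : ℤ :=
  ordZ t (rsMinor W (rowsSet r a b))

/-- `N* = Q_U·Q_L·N·T_L·T_U` is a `μ`-generic matrix obtained from `N`. -/
def MuGenericVia (t : R) (r : ℕ) (μ : ℕ → ℕ) (N Nstar : Matrix (Fin r) (Fin r) R) : Prop :=
  ∃ QU QL TL TU QhL QhU : Matrix (Fin r) (Fin r) R,
    Nstar = QU * QL * N * (TL * TU) ∧
    UpperTri QU ∧ MuAdmissible t r μ QU ∧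
    LowerTri QL ∧ MuAdmissible t r μ QL ∧
    UpperTri TU ∧ IsUnit TU.det ∧
    (∃ (σ : Equiv.Perm (Fin r)) (L : Matrix (Fin r) (Fin r) R),
      LowerTri L ∧ TL = σ.permMatrix R * L) ∧
    IsUnit TL.det ∧
    UpperTri (QL * N * TL) ∧
    QU * QL = QhL * QhU ∧
    LowerTri QhL ∧ MuAdmissible t r μ QhL ∧
    UpperTri QhU ∧ MuAdmissible t r μ QhU ∧
    ∀ (k : ℕ), k ≤ r → ∀ I J : Fin k → Fin r, StrictMono I → StrictMono J →
      (ord t ((QU * QL * N * (TL * TU)).submatrix I J).det =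
        sInf {m : ℕ∞ | ∃ S : Fin k → Fin r, StrictMono S ∧ (∀ s, I s ≤ S s) ∧
          m = ord t ((QL * N * (TL * TU)).submatrix S J).det}) ∧
      (ord t ((QU * QL * N * (TL * TU)).submatrix I J).det =
        sInf {m : ℕ∞ | ∃ H : Fin k → Fin r, StrictMono H ∧ (∀ s, H s ≤ I s) ∧
          m = ord t ((QhU * N * (TL * TU)).submatrix H J).det +
            ((wt r μ H - wt r μ I : ℕ) : ℕ∞)}) ∧
      (ord t ((QU * QL * N * (TL * TU)).submatrix I J).det =
        sInf {m : ℕ∞ | ∃ H : Fin k → Fin r, StrictMono H ∧ (∀ s, H s ≤ J s) ∧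
          m = ord t ((QU * QL * N * TL).submatrix I H).det})

/-- `N*` is `μ`-generic: it arises from some full-rank `N` via the generic factorization. -/
def MuGeneric (t : R) (r : ℕ) (μ : ℕ → ℕ) (Nstar : Matrix (Fin r) (Fin r) R) : Prop :=
  ∃ N : Matrix (Fin r) (Fin r) R, N.det ≠ 0 ∧ MuGenericVia t r μ N Nstar

/-- A Littlewood–Richardson filling of the skew shape `λ/μ` with content `ν`
(1-indexed triangular array `k i j`, `1 ≤ i ≤ j ≤ r`). -/
def IsLRFilling (r : ℕ) (μ ν lam : ℕ → ℕ) (k : ℕ → ℕ → ℤ) : Prop :=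
  (∀ j, 1 ≤ j → j ≤ r → (μ j : ℤ) + ∑ s ∈ Finset.Icc 1 j, k s j = (lam j : ℤ)) ∧
  (∀ i, 1 ≤ i → i ≤ r → ∑ s ∈ Finset.Icc i r, k i s = (ν i : ℤ)) ∧
  (∀ i j, 1 ≤ i → i ≤ j → j ≤ r → 0 ≤ k i j) ∧
  (∀ i j, 2 ≤ j → j ≤ r → 1 ≤ i → i ≤ j →
    (μ j : ℤ) + ∑ s ∈ Finset.Icc 1 i, k s j ≤
      (μ (j - 1) : ℤ) + ∑ s ∈ Finset.Icc 1 (i - 1), k s (j - 1)) ∧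
  (∀ i j, 1 ≤ i → i ≤ r - 1 → i ≤ j → j ≤ r - 1 →
    ∑ s ∈ Finset.Icc (i + 1) (j + 1), k (i + 1) s ≤ ∑ s ∈ Finset.Icc i j, k i s)

/-- The determinantal formula defining the integers `k i j` from a `μ`-generic matrix:
`k_{1j} + ⋯ + k_{ij} = ‖N*(rows {1,…,j−i−1} ∪ {j,…,r})‖ − ‖N*(rows {1,…,j−i} ∪ {j+1,…,r})‖`. -/
def DetFormula (t : R) {r : ℕ} (Nstar : Matrix (Fin r) (Fin r) R) (k : ℕ → ℕ → ℤ) : Prop :=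
  ∀ i j, 1 ≤ i → i ≤ j → j ≤ r →
    ∑ s ∈ Finset.Icc 1 i, k s j =
      dMinorZ t Nstar (j - i - 1) j - dMinorZ t Nstar (j - i) (j + 1)

end Defs

/-- The block matrix `N_i` from Theorem 3.2: identity of size `i-1` block-summed with the
upper bidiagonal matrix `T_i` with diagonal `t^{k_{i,i}}, …, t^{k_{i,r}}` and superdiagonal `1`. -/
noncomputable def blockN {R : Type*} [CommRing R] (t : R) (r : ℕ) (k : ℕ → ℕ → ℤ) (i : ℕ) :
    Matrix (Fin r) (Fin r) R :=
  Matrix.of fun p q =>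
    if p.1 + 1 < i ∨ q.1 + 1 < i then (if p = q then 1 else 0)
    else if p = q then t ^ (k i (p.1 + 1)).toNat
    else if q.1 = p.1 + 1 then 1 else 0

/-- The ordered product `N_1 · N_2 ⋯ N_i`. -/
noncomputable def blockProd {R : Type*} [CommRing R] (t : R) (r : ℕ) (k : ℕ → ℕ → ℤ) (i : ℕ) :
    Matrix (Fin r) (Fin r) R :=
  ((List.range i).map fun s => blockN t r k (s + 1)).prod

/-!
`D_μ` is already in Smith form. For `D_μ N_1 ⋯ N_i`, condition (LR3) says that
`D_{λ^{(s-1)}} N_s D_{λ^{(s)}}⁻¹` is an integral unipotent upper triangular matrix, so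
`D_μ N_1 ⋯ N_i = P D_{λ^{(i)}}` with `P` unipotent.

For `A = N_1 ⋯ N_i`, condition (LR4) is what makes back substitution through the bidiagonal
factors stay integral, so that `N_j ⋯ N_i v_j = t^{ν_j} e_r` has a solution `v_j` over `R`; it
vanishes above row `j` and is `±1` in row `j`. The `v_j` together with `e_{i+1}, …, e_r` form
a triangular `X` with unit diagonal and `A X = Y diag(t^{ν_1}, …, t^{ν_i}, 1, …, 1)`; comparing
determinants shows that `Y` is invertible too.
-/

open Finset

section General

variable {R : Type*} [CommRing R]

lemma SmithInv.of_mul_eq_mul {t : R} {r : ℕ} {μ : ℕ → ℕ} {A X Y : Matrix (Fin r) (Fin r) R}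
    (hμ : ∀ i, 1 ≤ i → i < r → μ (i + 1) ≤ μ i) (hX : IsUnit X.det) (hY : IsUnit Y.det)
    (h : A * X = Y * Dmu t r μ) : SmithInv t r A μ := by
  refine ⟨hμ, Y⁻¹, X, Y.isUnit_nonsing_inv_det hY, hX, ?_⟩
  rw [Matrix.mul_assoc, h, ← Matrix.mul_assoc, Y.nonsing_inv_mul hY, Matrix.one_mul]

lemma Dmu_congr (t : R) {r : ℕ} {μ μ' : ℕ → ℕ} (h : ∀ j, 1 ≤ j → j ≤ r → μ j = μ' j) :
    Dmu t r μ = Dmu t r μ' := by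
  unfold Dmu
  congr with p
  rw [h _ le_add_self p.2]

lemma SmithInv.congr {t : R} {r : ℕ} {M : Matrix (Fin r) (Fin r) R} {μ μ' : ℕ → ℕ}
    (h : ∀ j, 1 ≤ j → j ≤ r → μ j = μ' j) (hM : SmithInv t r M μ) : SmithInv t r M μ' := by
  obtain ⟨hmono, P, Q, hP, hQ, hPQ⟩ := hM
  refine ⟨fun i hi hir => ?_, P, Q, hP, hQ, hPQ.trans (Dmu_congr t h)⟩
  rw [← h i hi hir.le, ← h (i + 1) (by omega) hir]
  exact hmono i hi hir

lemma isUnit_det_of_mul_eq_mul [IsDomain R] {n : Type*} [Fintype n] [DecidableEq n]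
    {A X Y D : Matrix n n R} (h : A * X = Y * D) (hX : IsUnit X.det) (hdet : A.det = D.det)
    (hD : D.det ≠ 0) : IsUnit Y.det := by
  have h' := congrArg Matrix.det h
  rw [det_mul, det_mul, hdet, mul_comm] at h'
  rwa [← mul_right_cancel₀ hD h']

lemma sum_fin_ite_le {M : Type*} [AddCommMonoid M] (f : ℕ → M) {s : ℕ} (hs : 1 ≤ s) (r : ℕ) :
    ∑ p : Fin r, (if s ≤ p.1 + 1 then f (p.1 + 1) else 0) = ∑ c ∈ Icc s r, f c := by
  rw [Fin.sum_univ_eq_sum_range (fun m => if s ≤ m + 1 then f (m + 1) else 0)]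
  induction r with
  | zero => rw [Icc_eq_empty (by omega), sum_range_zero, sum_empty]
  | succ r ih =>
    rw [sum_range_succ, ih]
    by_cases h : s ≤ r + 1
    · rw [if_pos h, sum_Icc_succ_top h]
    · rw [if_neg h, add_zero, Icc_eq_empty (by omega), Icc_eq_empty (by omega)]

lemma natCast_sum_toNat {ι : Type*} {s : Finset ι} {f : ι → ℤ} (h : ∀ i ∈ s, 0 ≤ f i) :
    ((∑ i ∈ s, (f i).toNat : ℕ) : ℤ) = ∑ i ∈ s, f i := by
  push_cast
  exact sum_congr rfl fun i hi => Int.toNat_of_nonneg (h i hi)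

def vecAt {r : ℕ} (x : Fin r → R) (n : ℕ) : R := if h : n < r then x ⟨n, h⟩ else 0

lemma sum_ite_val_eq {r : ℕ} (x : Fin r → R) (n : ℕ) :
    ∑ q : Fin r, (if q.1 = n then x q else 0) = vecAt x n := by
  unfold vecAt
  split_ifs with h
  · simp_rw [← Fin.ext_iff (b := ⟨n, h⟩)]
    exact sum_ite_eq' _ _ _ |>.trans (if_pos (mem_univ _))
  · exact sum_eq_zero fun q _ => if_neg (by omega)

def altTail (c : ℕ → R) (r p : ℕ) : R := ∑ q ∈ Ico p r, (-1) ^ (q - p) * c q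

lemma altTail_add_altTail_succ (c : ℕ → R) {r p : ℕ} (hp : p < r) :
    altTail c r p + altTail c r (p + 1) = c p := by
  unfold altTail
  rw [sum_eq_sum_Ico_succ_bot hp, Nat.sub_self, pow_zero, one_mul, add_assoc,
    ← sum_add_distrib, sum_eq_zero, add_zero]
  intro q hq
  rw [show q - p = q - (p + 1) + 1 by have := (mem_Ico.mp hq).1; omega, pow_succ]
  ring

lemma altTail_of_le (c : ℕ → R) {r p : ℕ} (hp : r ≤ p) : altTail c r p = 0 := by
  simp [altTail, Ico_eq_empty_of_le hp]

lemma altTail_ite_eq (r : ℕ) {p : ℕ} (hp : p < r) :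
    altTail (fun n => if n + 1 = r then (1 : R) else 0) r p = (-1) ^ (r - 1 - p) := by
  unfold altTail
  simp_rw [mul_ite, mul_one, mul_zero, show ∀ n, (n + 1 = r) = (n = r - 1) from
    fun n => propext (by omega)]
  rw [sum_ite_eq', if_pos (mem_Ico.mpr ⟨by omega, by omega⟩)]

end General

section BlockN

variable {R : Type*} [CommRing R] (t : R) (r : ℕ) (k : ℕ → ℕ → ℤ)

def rowSum (s n : ℕ) : ℕ := ∑ c ∈ Icc s n, (k s c).toNat

lemma rowSum_succ {s n : ℕ} (h : s ≤ n + 1) :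
    rowSum k s (n + 1) = rowSum k s n + (k s (n + 1)).toNat :=
  sum_Icc_succ_top h _

lemma rowSum_of_lt {s n : ℕ} (h : n < s) : rowSum k s n = 0 := by
  rw [rowSum, Icc_eq_empty (by omega), sum_empty]

lemma blockN_eq (s : ℕ) :
    blockN t r k s =
      diagonal (fun p => t ^ (if s ≤ p.1 + 1 then (k s (p.1 + 1)).toNat else 0)) +
        of fun p q => if s ≤ p.1 + 1 ∧ q.1 = p.1 + 1 then 1 else 0 := by
  ext p q
  simp only [blockN, Matrix.add_apply, diagonal_apply, of_apply, Fin.ext_iff]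
  split_ifs <;> first | omega | simp

lemma blockN_mulVec_apply (s : ℕ) (x : Fin r → R) (p : Fin r) :
    (blockN t r k s *ᵥ x) p =
      t ^ (if s ≤ p.1 + 1 then (k s (p.1 + 1)).toNat else 0) * x p +
        if s ≤ p.1 + 1 then vecAt x (p.1 + 1) else 0 := by
  rw [blockN_eq, add_mulVec, Pi.add_apply, mulVec_diagonal]
  congr 1
  simp only [mulVec, dotProduct, of_apply, ite_mul, one_mul, zero_mul, ite_and]
  split_ifs
  · exact sum_ite_val_eq x _
  · exact sum_const_zero

lemma blockN_isUpperTriangular (s : ℕ) : (blockN t r k s).IsUpperTriangular := by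
  intro p q (hqp : q < p)
  rw [blockN_eq, Matrix.add_apply, diagonal_apply_ne _ hqp.ne', of_apply, if_neg (by omega),
    add_zero]

lemma det_blockN {s : ℕ} (hs : 1 ≤ s) : (blockN t r k s).det = t ^ rowSum k s r := by
  rw [det_of_isUpperTriangular (blockN_isUpperTriangular t r k s)]
  simp only [blockN_eq, Matrix.add_apply, diagonal_apply_eq, of_apply]
  simp only [show ∀ p : ℕ, ¬(p = p + 1) from fun p => by omega, and_false, if_false, add_zero]
  rw [prod_pow_eq_pow_sum, rowSum, ← sum_fin_ite_le (fun c => (k s c).toNat) hs]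

/-- The product `N_a ⋯ N_{a+n-1}` of `n` consecutive factors. -/
noncomputable def prodSeg (a n : ℕ) : Matrix (Fin r) (Fin r) R :=
  ((List.range' a n).map (blockN t r k)).prod

lemma prodSeg_zero (a : ℕ) : prodSeg t r k a 0 = 1 := rfl

lemma prodSeg_succ (a n : ℕ) :
    prodSeg t r k a (n + 1) = blockN t r k a * prodSeg t r k (a + 1) n := by
  simp [prodSeg, List.range'_succ]

lemma prodSeg_add (a m n : ℕ) :
    prodSeg t r k a (m + n) = prodSeg t r k a m * prodSeg t r k (a + m) n := by
  rw [prodSeg, ← List.range'_append, List.map_append, List.prod_append, one_mul]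
  rfl

lemma blockProd_eq_prodSeg (n : ℕ) : blockProd t r k n = prodSeg t r k 1 n := by
  rw [blockProd, prodSeg, List.range'_eq_map_range, List.map_map]
  simp only [Function.comp_def, add_comm 1]

lemma det_prodSeg {a : ℕ} (ha : 1 ≤ a) (n : ℕ) :
    (prodSeg t r k a n).det = ∏ s ∈ range n, t ^ rowSum k (a + s) r := by
  induction n generalizing a with
  | zero => simp [prodSeg_zero]
  | succ n ih =>
    rw [prodSeg_succ, det_mul, det_blockN t r k ha, ih (by omega), prod_range_succ']
    simp only [add_zero, add_assoc, add_comm 1]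
    ring

end BlockN

section Solve

variable {R : Type*} [CommRing R] {t : R} {r : ℕ} {k : ℕ → ℕ → ℤ}

/-- Condition (LR4) on the row sums of the (truncated) filling. -/
def LatticeRowSums (k : ℕ → ℕ → ℤ) (r : ℕ) : Prop :=
  ∀ a b, 1 ≤ a → a ≤ b → b + 1 ≤ r → rowSum k (a + 1) (b + 1) ≤ rowSum k a b

/-- Back substitution through the bidiagonal `N_s`: the rows `t^{k_{s,p}} x_p + x_{p+1} = w_p`
telescope because `altTail c r p + altTail c r (p + 1) = c p`. -/
def blockNSol (t : R) (r : ℕ) (k : ℕ → ℕ → ℤ) (s : ℕ) (c : ℕ → R) (w : Fin r → R) :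
    Fin r → R :=
  fun p => if s ≤ p.1 + 1 then t ^ rowSum k s p.1 * altTail c r p.1 else w p

lemma blockN_mulVec_blockNSol {s : ℕ} {c : ℕ → R} {w : Fin r → R}
    (hw : ∀ p : Fin r, s ≤ p.1 + 1 → w p = t ^ rowSum k s (p.1 + 1) * c p.1) :
    blockN t r k s *ᵥ blockNSol t r k s c w = w := by
  funext p
  rw [blockN_mulVec_apply]
  by_cases hp : s ≤ p.1 + 1
  · have hnext : vecAt (blockNSol t r k s c w) (p.1 + 1) =
        t ^ rowSum k s (p.1 + 1) * altTail c r (p.1 + 1) := by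
      unfold vecAt
      split_ifs with h
      · exact if_pos (by dsimp only; omega)
      · rw [altTail_of_le c (by omega), mul_zero]
    rw [if_pos hp, if_pos hp, hnext, blockNSol, if_pos hp, hw p hp, rowSum_succ k hp,
      ← altTail_add_altTail_succ c p.2]
    ring
  · rw [if_neg hp, if_neg hp, pow_zero, one_mul, add_zero, blockNSol, if_neg hp]

lemma pow_rowSum_dvd_blockNSol (hk : LatticeRowSums k r) {s : ℕ} (hs : 1 ≤ s) (c : ℕ → R)
    (w : Fin r → R) {p : Fin r} (hp : s + 1 ≤ p.1 + 1) :
    t ^ rowSum k (s + 1) (p.1 + 1) ∣ blockNSol t r k s c w p := by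
  rw [blockNSol, if_pos (by omega)]
  exact (pow_dvd_pow t (hk s p.1 hs (by omega) p.2)).mul_right _

lemma exists_prodSeg_mulVec_eq (hk : LatticeRowSums k r) (n : ℕ) {a : ℕ} (ha : 1 ≤ a)
    (w : Fin r → R) (hw : ∀ p : Fin r, a ≤ p.1 + 1 → t ^ rowSum k a (p.1 + 1) ∣ w p) :
    ∃ x, prodSeg t r k a n *ᵥ x = w := by
  induction n generalizing a w with
  | zero => exact ⟨w, by rw [prodSeg_zero, one_mulVec]⟩
  | succ n ih =>
    have hc : ∀ p : Fin r, ∃ c : R, a ≤ p.1 + 1 → w p = t ^ rowSum k a (p.1 + 1) * c :=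
      fun p => if h : a ≤ p.1 + 1 then (hw p h).imp fun _ hc _ => hc else ⟨0, fun h' => absurd h' h⟩
    choose c hc using hc
    obtain ⟨x, hx⟩ := ih (by omega) (blockNSol t r k a (vecAt c) w)
      fun p hp => pow_rowSum_dvd_blockNSol hk ha _ _ hp
    refine ⟨x, ?_⟩
    rw [prodSeg_succ, ← mulVec_mulVec, hx, blockN_mulVec_blockNSol]
    intro p hp
    rw [hc p hp, vecAt, dif_pos p.2]

lemma prodSeg_mulVec_apply_of_lt (x : Fin r → R) (n : ℕ) {a : ℕ} {p : Fin r}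
    (hp : p.1 + 1 < a) : (prodSeg t r k a n *ᵥ x) p = x p := by
  induction n generalizing a x with
  | zero => rw [prodSeg_zero, one_mulVec]
  | succ n ih =>
    rw [prodSeg_succ, ← mulVec_mulVec, blockN_mulVec_apply, if_neg (by omega), if_neg (by omega),
      pow_zero, one_mul, add_zero, ih _ (by omega)]

def lastVec (r : ℕ) : Fin r → R := fun p => if p.1 + 1 = r then 1 else 0

lemma exists_prodSeg_mulVec_eq_lastVec (hk : LatticeRowSums k r) {j : ℕ} (hj : 1 ≤ j)
    (hjr : j ≤ r) (n : ℕ) :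
    ∃ v : Fin r → R, prodSeg t r k j (n + 1) *ᵥ v = t ^ rowSum k j r • lastVec r ∧
      (∀ p : Fin r, p.1 + 1 < j → v p = 0) ∧ (∀ p : Fin r, p.1 + 1 = j → v p = (-1) ^ (r - j)) := by
  set u := blockNSol t r k j (fun m => if m + 1 = r then 1 else 0)
    (t ^ rowSum k j r • lastVec r) with hu
  obtain ⟨v, hv⟩ := exists_prodSeg_mulVec_eq hk n (a := j + 1) (by omega) u
    fun p hp => pow_rowSum_dvd_blockNSol hk hj _ _ hp
  have hvu : ∀ p : Fin r, p.1 + 1 ≤ j → v p = u p := fun p hp => by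
    rw [← hv, prodSeg_mulVec_apply_of_lt _ _ (by omega)]
  refine ⟨v, ?_, fun p hp => ?_, fun p hp => ?_⟩
  · rw [prodSeg_succ, ← mulVec_mulVec, hv, blockN_mulVec_blockNSol]
    intro p _
    simp only [Pi.smul_apply, lastVec, smul_eq_mul, mul_ite, mul_one, mul_zero]
    split_ifs with h
    · rw [h]
    · rfl
  · rw [hvu p hp.le, hu, blockNSol, if_neg (by omega), Pi.smul_apply, lastVec, if_neg (by omega),
      smul_zero]
  · rw [hvu p hp.le, hu, blockNSol, if_pos hp.ge, rowSum_of_lt k (by omega), pow_zero, one_mul,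
      altTail_ite_eq r p.2]
    congr 1
    omega

end Solve

section Invariants

variable {R : Type*} [CommRing R] {t : R} {r : ℕ} {k : ℕ → ℕ → ℤ}

lemma det_blockProd_eq_det_Dmu {ν : ℕ → ℕ} (hkν : ∀ j, 1 ≤ j → j ≤ r → rowSum k j r = ν j)
    {i : ℕ} (hir : i ≤ r) :
    (blockProd t r k i).det = (Dmu t r fun s => if s ≤ i then ν s else 0).det := by
  rw [blockProd_eq_prodSeg, det_prodSeg t r k le_rfl, Dmu, det_diagonal,
    Fin.prod_univ_eq_prod_range (fun m => t ^ if m + 1 ≤ i then ν (m + 1) else 0),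
    ← prod_subset (range_subset_range.mpr hir) fun m _ hm => by
      rw [if_neg (by simpa using hm), pow_zero]]
  refine prod_congr rfl fun m hm => ?_
  rw [mem_range] at hm
  rw [if_pos (by omega), add_comm 1, hkν (m + 1) (by omega) (by omega)]

lemma exists_blockProd_mul_eq_mul_Dmu (hk : LatticeRowSums k r) {ν : ℕ → ℕ}
    (hkν : ∀ j, 1 ≤ j → j ≤ r → rowSum k j r = ν j) {i : ℕ} (hir : i ≤ r) :
    ∃ X Y : Matrix (Fin r) (Fin r) R, IsUnit X.det ∧
      blockProd t r k i * X = Y * Dmu t r fun s => if s ≤ i then ν s else 0 := by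
  have hV : ∀ j, ∃ v : Fin r → R, 1 ≤ j → j ≤ i →
      prodSeg t r k j (i - j + 1) *ᵥ v = t ^ ν j • lastVec r ∧
      (∀ p : Fin r, p.1 + 1 < j → v p = 0) ∧ (∀ p : Fin r, p.1 + 1 = j → v p = (-1) ^ (r - j)) :=
    fun j => if h : 1 ≤ j ∧ j ≤ i then
      (exists_prodSeg_mulVec_eq_lastVec hk h.1 (h.2.trans hir) (i - j)).imp fun v hv _ _ => by
        rwa [← hkν j h.1 (h.2.trans hir)]
      else ⟨0, fun h1 h2 => absurd ⟨h1, h2⟩ h⟩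
  choose V hV using hV
  -- `N_1 ⋯ N_i (V j) = t ^ ν_j • N_1 ⋯ N_{j-1} e_r` is the `j`-th column of `Y * D`
  let X : Matrix (Fin r) (Fin r) R :=
    of fun p q => if q.1 + 1 ≤ i then V (q.1 + 1) p else (Pi.single q (1 : R) : Fin r → R) p
  let Y : Matrix (Fin r) (Fin r) R := of fun p q =>
    if q.1 + 1 ≤ i then (prodSeg t r k 1 q.1 *ᵥ lastVec r) p else blockProd t r k i p q
  have hX : X.IsLowerTriangular := fun p q (hpq : p < q) => by
    simp only [X, of_apply]
    split_ifs with hq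
    · exact (hV _ (by omega) hq).2.1 p (by omega)
    · exact Pi.single_eq_of_ne hpq.ne 1
  refine ⟨X, Y, ?_, ?_⟩
  · rw [det_of_isLowerTriangular X hX, IsUnit.prod_univ_iff]
    intro p
    simp only [X, of_apply]
    split_ifs with hp
    · rw [(hV _ (by omega) hp).2.2 p rfl]
      exact isUnit_neg_one.pow _
    · rw [Pi.single_eq_same]
      exact isUnit_one
  · ext p q
    rw [Dmu, mul_diagonal]
    change (blockProd t r k i *ᵥ fun c => X c q) p = _
    simp only [X, Y, of_apply]
    split_ifs with hq
    · obtain ⟨hVq, -, -⟩ := hV (q.1 + 1) (by omega) hq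
      rw [blockProd_eq_prodSeg, show i = q.1 + (i - (q.1 + 1) + 1) by omega, prodSeg_add,
        add_comm 1, ← mulVec_mulVec]
      change (_ *ᵥ (_ *ᵥ V (q.1 + 1))) p = _
      rw [hVq, mulVec_smul, Pi.smul_apply, smul_eq_mul, mul_comm]
    · rw [pow_zero, mul_one, mulVec_single_one, col_apply]

theorem smithInv_blockProd [IsDomain R] (ht : t ≠ 0) (hk : LatticeRowSums k r) {ν : ℕ → ℕ}
    (hν : ∀ i, 1 ≤ i → i < r → ν (i + 1) ≤ ν i)
    (hkν : ∀ j, 1 ≤ j → j ≤ r → rowSum k j r = ν j) {i : ℕ} (hir : i ≤ r) :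
    SmithInv t r (blockProd t r k i) fun s => if s ≤ i then ν s else 0 := by
  obtain ⟨X, Y, hX, hXY⟩ := exists_blockProd_mul_eq_mul_Dmu (t := t) hk hkν hir
  have hD : (Dmu t r fun s => if s ≤ i then ν s else 0).det ≠ 0 := by
    rw [Dmu, det_diagonal]
    exact prod_ne_zero_iff.mpr fun _ _ => pow_ne_zero _ ht
  refine SmithInv.of_mul_eq_mul (fun s hs hsr => ?_) hX
    (isUnit_det_of_mul_eq_mul hXY hX (det_blockProd_eq_det_Dmu hkν hir) hD) hXY
  split_ifs <;> first | omega | exact hν s hs hsr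

/-- The partial shape `λ^{(n)}`. -/
def partialShape (μ : ℕ → ℕ) (k : ℕ → ℕ → ℤ) (n j : ℕ) : ℕ :=
  μ j + ∑ c ∈ Icc 1 (min n j), (k c j).toNat

lemma partialShape_zero (μ : ℕ → ℕ) (k : ℕ → ℕ → ℤ) : partialShape μ k 0 = μ := by
  ext j
  simp [partialShape]

lemma partialShape_succ (μ : ℕ → ℕ) (k : ℕ → ℕ → ℤ) (n j : ℕ) :
    partialShape μ k (n + 1) j =
      partialShape μ k n j + if n + 1 ≤ j then (k (n + 1) j).toNat else 0 := by
  unfold partialShape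
  split_ifs with h
  · rw [min_eq_left h, min_eq_left (by omega), sum_Icc_succ_top (by omega), add_assoc]
  · rw [min_eq_right (by omega), min_eq_right (by omega), add_zero]

lemma exists_Dmu_mul_blockN {a b : ℕ → ℕ} {s : ℕ}
    (hab : ∀ m, 1 ≤ m → m ≤ r → b m = a m + if s ≤ m then (k s m).toNat else 0)
    (hba : ∀ m, s ≤ m → m + 1 ≤ r → b (m + 1) ≤ a m) :
    ∃ P : Matrix (Fin r) (Fin r) R, IsUnit P.det ∧ Dmu t r a * blockN t r k s = P * Dmu t r b := by
  let P : Matrix (Fin r) (Fin r) R := 1 + of fun p q =>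
    if s ≤ p.1 + 1 ∧ q.1 = p.1 + 1 then t ^ (a (p.1 + 1) - b (q.1 + 1)) else 0
  have hP : P.IsUpperTriangular := fun p q (hqp : q < p) => by
    simp only [P, Matrix.add_apply, one_apply_ne hqp.ne', of_apply, zero_add]
    exact if_neg (by omega)
  refine ⟨P, ?_, ?_⟩
  · rw [det_of_isUpperTriangular hP, IsUnit.prod_univ_iff]
    intro p
    simp only [P, Matrix.add_apply, one_apply_eq, of_apply]
    rw [if_neg (by omega), add_zero]
    exact isUnit_one
  ext p q
  simp only [Dmu, diagonal_mul, mul_diagonal, blockN_eq, P, Matrix.add_apply, diagonal_apply,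
    one_apply, of_apply]
  by_cases hpq : p = q
  · subst hpq
    simp only [↓reduceIte, show ¬(p.1 = p.1 + 1) by omega, and_false, add_zero, one_mul,
      ← pow_add, hab _ le_add_self p.2]
  · rw [if_neg hpq, if_neg hpq, zero_add, zero_add]
    split_ifs with h
    · rw [mul_one, ← pow_add, h.2, Nat.sub_add_cancel (hba _ h.1 (by omega))]
    · rw [mul_zero, zero_mul]

lemma blockProd_succ (n : ℕ) :
    blockProd t r k (n + 1) = blockProd t r k n * blockN t r k (n + 1) := by
  rw [blockProd_eq_prodSeg, blockProd_eq_prodSeg, prodSeg_add, prodSeg_succ, prodSeg_zero,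
    mul_one, add_comm 1]

lemma exists_Dmu_mul_blockProd {μ : ℕ → ℕ}
    (hshape : ∀ s m, s + 1 ≤ m → m + 1 ≤ r →
      partialShape μ k (s + 1) (m + 1) ≤ partialShape μ k s m) (n : ℕ) :
    ∃ P : Matrix (Fin r) (Fin r) R, IsUnit P.det ∧
      Dmu t r μ * blockProd t r k n = P * Dmu t r (partialShape μ k n) := by
  induction n with
  | zero =>
    exact ⟨1, by simp, by
      rw [partialShape_zero, blockProd_eq_prodSeg, prodSeg_zero, mul_one, one_mul]⟩
  | succ n ih =>
    obtain ⟨P, hP, h⟩ := ih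
    obtain ⟨P', hP', h'⟩ := exists_Dmu_mul_blockN (t := t) (k := k) (s := n + 1)
      (fun m _ _ => partialShape_succ μ k n m) (fun m hm hmr => hshape n m hm hmr)
    refine ⟨P * P', by rw [det_mul]; exact hP.mul hP', ?_⟩
    rw [blockProd_succ, ← Matrix.mul_assoc, h, Matrix.mul_assoc, h', Matrix.mul_assoc]

theorem smithInv_Dmu_mul_blockProd {μ : ℕ → ℕ} {n : ℕ}
    (hmono : ∀ j, 1 ≤ j → j < r → partialShape μ k n (j + 1) ≤ partialShape μ k n j)
    (hshape : ∀ s m, s + 1 ≤ m → m + 1 ≤ r →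
      partialShape μ k (s + 1) (m + 1) ≤ partialShape μ k s m) :
    SmithInv t r (Dmu t r μ * blockProd t r k n) (partialShape μ k n) := by
  obtain ⟨P, hP, h⟩ := exists_Dmu_mul_blockProd (t := t) hshape n
  exact .of_mul_eq_mul (X := 1) hmono (by simp) hP (by rw [mul_one, h])

end Invariants

namespace IsLRFilling

variable {r : ℕ} {μ ν lam : ℕ → ℕ} {k : ℕ → ℕ → ℤ}

lemma natCast_rowSum (hF : IsLRFilling r μ ν lam k) {a b : ℕ} (ha : 1 ≤ a) (hb : b ≤ r) :
    (rowSum k a b : ℤ) = ∑ c ∈ Icc a b, k a c :=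
  natCast_sum_toNat fun c hc => hF.2.2.1 a c ha (mem_Icc.mp hc).1 ((mem_Icc.mp hc).2.trans hb)

lemma natCast_sum_toNat_col (hF : IsLRFilling r μ ν lam k) {i j : ℕ} (hij : i ≤ j) (hj : j ≤ r) :
    ((∑ c ∈ Icc 1 i, (k c j).toNat : ℕ) : ℤ) = ∑ c ∈ Icc 1 i, k c j :=
  natCast_sum_toNat fun c hc => hF.2.2.1 c j (mem_Icc.mp hc).1 ((mem_Icc.mp hc).2.trans hij) hj

lemma rowSum_eq (hF : IsLRFilling r μ ν lam k) {j : ℕ} (hj : 1 ≤ j) (hjr : j ≤ r) :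
    rowSum k j r = ν j := by
  have h := hF.2.1 j hj hjr
  rw [← hF.natCast_rowSum hj le_rfl] at h
  exact_mod_cast h

lemma latticeRowSums (hF : IsLRFilling r μ ν lam k) : LatticeRowSums k r := by
  intro a b ha hab hbr
  have h := hF.2.2.2.2 a b ha (by omega) hab (by omega)
  rw [← hF.natCast_rowSum (by omega) hbr, ← hF.natCast_rowSum ha (by omega)] at h
  exact_mod_cast h

lemma shape_le (hF : IsLRFilling r μ ν lam k) {i j : ℕ} (hi : 1 ≤ i) (hij : i ≤ j + 1)
    (hj : 1 ≤ j) (hjr : j + 1 ≤ r) :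
    μ (j + 1) + ∑ c ∈ Icc 1 i, (k c (j + 1)).toNat ≤
      μ j + ∑ c ∈ Icc 1 (i - 1), (k c j).toNat := by
  have h := hF.2.2.2.1 i (j + 1) (by omega) hjr hi hij
  rw [Nat.add_sub_cancel, ← hF.natCast_sum_toNat_col hij hjr,
    ← hF.natCast_sum_toNat_col (by omega) (by omega)] at h
  exact_mod_cast h

lemma partialShape_succ_le (hF : IsLRFilling r μ ν lam k) {s m : ℕ} (hsm : s + 1 ≤ m)
    (hmr : m + 1 ≤ r) : partialShape μ k (s + 1) (m + 1) ≤ partialShape μ k s m := by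
  have h := hF.shape_le (i := s + 1) (by omega) (by omega) (by omega) hmr
  unfold partialShape
  rwa [min_eq_left (by omega), min_eq_left (by omega)]

lemma partialShape_antitone (hF : IsLRFilling r μ ν lam k) {n j : ℕ} (hn : 1 ≤ n) (hj : 1 ≤ j)
    (hjr : j < r) : partialShape μ k n (j + 1) ≤ partialShape μ k n j :=
  (hF.shape_le (i := min n (j + 1)) (by omega) (min_le_right _ _) hj hjr).trans
    (Nat.add_le_add_left (sum_le_sum_of_subset (Icc_subset_Icc_right (by omega))) _)

lemma toNat_sum_eq_partialShape (hF : IsLRFilling r μ ν lam k) (n : ℕ) {j : ℕ} (hjr : j ≤ r) :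
    μ j + (∑ s ∈ Icc 1 (min n j), k s j).toNat = partialShape μ k n j := by
  rw [partialShape, ← hF.natCast_sum_toNat_col (min_le_right _ _) hjr, Int.toNat_natCast]

end IsLRFilling

theorem stmt0_general {R : Type*} [CommRing R] [IsDomain R]
    (t : R) (ht : Irreducible t) (r : ℕ) (μ ν lam : ℕ → ℕ) (k : ℕ → ℕ → ℤ)
    (hμ : ∀ i, 1 ≤ i → i < r → μ (i + 1) ≤ μ i)
    (hν : ∀ i, 1 ≤ i → i < r → ν (i + 1) ≤ ν i)
    (hF : IsLRFilling r μ ν lam k) :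
    SmithInv t r (Dmu t r μ) μ ∧
    (∀ i, 1 ≤ i → i ≤ r →
      SmithInv t r (blockProd t r k i) (fun s => if s ≤ i then ν s else 0) ∧
      SmithInv t r (Dmu t r μ * blockProd t r k i)
        (fun j => μ j + (∑ s ∈ Finset.Icc 1 (min i j), k s j).toNat)) := by
  refine ⟨⟨hμ, 1, 1, by simp, by simp, by simp⟩, fun i hi hir => ⟨?_, ?_⟩⟩
  · exact smithInv_blockProd ht.ne_zero hF.latticeRowSums hν (fun _ => hF.rowSum_eq) hir
  · refine SmithInv.congr (fun _ _ hjr => (hF.toNat_sum_eq_partialShape i hjr).symm) ?_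
    exact smithInv_Dmu_mul_blockProd (fun _ => hF.partialShape_antitone hi)
      fun _ _ => hF.partialShape_succ_le

theorem stmt0 {R : Type*} [CommRing R] [IsDomain R] [IsDiscreteValuationRing R]
    [CharZero (IsLocalRing.ResidueField R)]
    (t : R) (ht : Irreducible t) (r : ℕ) (μ ν lam : ℕ → ℕ) (k : ℕ → ℕ → ℤ)
    (hμ : ∀ i, 1 ≤ i → i < r → μ (i + 1) ≤ μ i)
    (hν : ∀ i, 1 ≤ i → i < r → ν (i + 1) ≤ ν i)
    (hlam : ∀ i, 1 ≤ i → i < r → lam (i + 1) ≤ lam i)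
    (hsub : ∀ j, 1 ≤ j → j ≤ r → μ j ≤ lam j)
    (hF : IsLRFilling r μ ν lam k) :
    SmithInv t r (Dmu t r μ) μ ∧
    (∀ i, 1 ≤ i → i ≤ r →
      SmithInv t r (blockProd t r k i) (fun s => if s ≤ i then ν s else 0) ∧
      SmithInv t r (Dmu t r μ * blockProd t r k i)
        (fun j => μ j + (∑ s ∈ Finset.Icc 1 (min i j), k s j).toNat)) :=
  stmt0_general t ht r μ ν lam k hμ hν hF
end

section
/- Let N* be a μ-generic r×r matrix over R, and let I, H, J be index sets of length k ≤ r with I ⊆ H ⊆ J. Then ‖N*_{IJ}‖ ≤ ‖N*_{HJ}‖ ≤ ‖N*_{IJ}‖ + |μ_I| − |μ_H|. -/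
open Matrix

/-! Both bounds are read off the genericity identities. By (E1), `‖N*_{IJ}‖` is a minimum over all
`S ⊇ I`, a larger family than the `S ⊇ H` defining `‖N*_{HJ}‖`. By (E2), it is a minimum over
`H' ⊆ I` of `‖(Q̂_U N T⁻¹)_{H'J}‖ + |μ_{H'}| − |μ_I|`; every such `H'` also competes for `H`, where
its weight defect grows by exactly `|μ_I| − |μ_H|` since `μ` is non-increasing. -/

theorem antitoneOn_Icc_of_succ_le {μ : ℕ → ℕ} {r : ℕ}
    (hμ : ∀ i, 1 ≤ i → i < r → μ (i + 1) ≤ μ i) : AntitoneOn μ (Set.Icc 1 r) :=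
  antitoneOn_of_add_one_le Set.ordConnected_Icc fun a _ ha ha' => hμ a ha.1 (by grind)

theorem wt_antitone {r : ℕ} {μ : ℕ → ℕ} (hμ : ∀ i, 1 ≤ i → i < r → μ (i + 1) ≤ μ i) {k : ℕ} :
    Antitone (wt r μ : (Fin k → Fin r) → ℕ) := fun I H hIH =>
  Finset.sum_le_sum fun s _ =>
    antitoneOn_Icc_of_succ_le hμ ⟨by omega, (I s).isLt⟩ ⟨by omega, (H s).isLt⟩
      (by simpa using hIH s)

theorem sInf_of_ge_mono {ι α : Type*} [Preorder ι] [CompleteLattice α]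
    (P : ι → Prop) (f : ι → α) {I H : ι} (hIH : I ≤ H) :
    sInf {m | ∃ S, P S ∧ I ≤ S ∧ m = f S} ≤ sInf {m | ∃ S, P S ∧ H ≤ S ∧ m = f S} :=
  sInf_le_sInf fun _ ⟨S, hS, hHS, hm⟩ => ⟨S, hS, hIH.trans hHS, hm⟩

theorem sInf_weighted_of_le_le_add {ι : Type*} [Preorder ι] (P : ι → Prop) (f : ι → ℕ∞)
    {w : ι → ℕ} (hw : Antitone w) {I H : ι} (hIH : I ≤ H) :
    sInf {m | ∃ S, P S ∧ S ≤ H ∧ m = f S + ((w S - w H : ℕ) : ℕ∞)} ≤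
      sInf {m | ∃ S, P S ∧ S ≤ I ∧ m = f S + ((w S - w I : ℕ) : ℕ∞)} +
        ((w I - w H : ℕ) : ℕ∞) := by
  rw [ENat.sInf_add]
  refine le_iInf₂ fun _ ⟨S, hS, hSI, hm⟩ => sInf_le ⟨S, hS, hSI.trans hIH, ?_⟩
  have := hw hSI
  have := hw hIH
  rw [hm, add_assoc, ← Nat.cast_add]
  congr 2
  omega

theorem stmt6_general {R : Type*} [CommRing R]
    (t : R) (r : ℕ) (μ : ℕ → ℕ)
    (hμ : ∀ i, 1 ≤ i → i < r → μ (i + 1) ≤ μ i)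
    (Nstar : Matrix (Fin r) (Fin r) R) (hgen : MuGeneric t r μ Nstar)
    (k : ℕ) (hkr : k ≤ r) (I H J : Fin k → Fin r)
    (hI : StrictMono I) (hH : StrictMono H) (hJ : StrictMono J)
    (hIH : ∀ s, I s ≤ H s) :
    ord t (Nstar.submatrix I J).det ≤ ord t (Nstar.submatrix H J).det ∧
    ord t (Nstar.submatrix H J).det ≤
      ord t (Nstar.submatrix I J).det + ((wt r μ I - wt r μ H : ℕ) : ℕ∞) := by
  obtain ⟨N, -, QU, QL, TL, TU, QhL, QhU, rfl, -, -, -, -, -, -, -, -, -, -, -, -, -, -, hE⟩ :=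
    hgen
  obtain ⟨E1I, E2I, -⟩ := hE k hkr I J hI hJ
  obtain ⟨E1H, E2H, -⟩ := hE k hkr H J hH hJ
  constructor
  · rw [E1I, E1H]
    exact sInf_of_ge_mono StrictMono _ hIH
  · rw [E2I, E2H]
    exact sInf_weighted_of_le_le_add StrictMono _ (wt_antitone hμ) hIH

theorem stmt6 {R : Type*} [CommRing R] [IsDomain R] [IsDiscreteValuationRing R]
    [CharZero (IsLocalRing.ResidueField R)]
    (t : R) (ht : Irreducible t) (r : ℕ) (μ : ℕ → ℕ)
    (hμ : ∀ i, 1 ≤ i → i < r → μ (i + 1) ≤ μ i)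
    (Nstar : Matrix (Fin r) (Fin r) R) (hgen : MuGeneric t r μ Nstar)
    (k : ℕ) (hkr : k ≤ r) (I H J : Fin k → Fin r)
    (hI : StrictMono I) (hH : StrictMono H) (hJ : StrictMono J)
    (hIH : ∀ s, I s ≤ H s) (hHJ : ∀ s, H s ≤ J s) :
    ord t (Nstar.submatrix I J).det ≤ ord t (Nstar.submatrix H J).det ∧
    ord t (Nstar.submatrix H J).det ≤
      ord t (Nstar.submatrix I J).det + ((wt r μ I - wt r μ H : ℕ) : ℕ∞) :=
  stmt6_general t r μ hμ Nstar hgen k hkr I H J hI hH hJ hIH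
end

section
/- Let N* be a μ-generic r×r matrix over R. Then for all 1 ≤ i ≤ j ≤ r, with all minors taken using the indicated rows and the last columns matching the number of rows: ‖N*(rows {1,…,j−i} ∪ {j,…,r})‖ + ‖N*(rows {1,…,j−i} ∪ {j+1,…,r})‖ ≤ ‖N*(rows {1,…,j−i−1} ∪ {j,…,r})‖ + ‖N*(rows {1,…,j−i+1} ∪ {j+1,…,r})‖. Equivalently, the integers k_{ij} defined from N* by the determinantal formula satisfy k_{ij} ≥ 0 for all 1 ≤ i ≤ j ≤ r. -/
/-!
Since `N*` is upper triangular, a right-justified minor with rows `{1,…,a} ∪ {c+1,…,r}` factors as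
the `a × a` minor in rows `1,…,a` and columns `c-a+1,…,c` times the diagonal entries of the rows
`c+1,…,r`. For `a = j - i ≥ 1` this turns the four minors of the inequality into the determinant
of one `(a+1) × (a+1)` matrix `V` (rows `1,…,a+1`, columns `i,…,j`) and three of its minors
`A, B, C`, related by the Desnanot–Jacobi identity `det V · det C = det X₀ · det A - det X · det B`,
where `X, X₀` arise from `A, B` by moving their last row one step down. Condition (E1) makes the
order of a minor monotone in its rows, so `‖A‖ ≤ ‖X‖` and `‖B‖ ≤ ‖X₀‖`, and the ultrametric
inequality gives `‖A‖ + ‖B‖ ≤ ‖V‖ + ‖C‖`. The `k_{ij}` are successive differences of these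
quantities, hence nonnegative.
-/

open Matrix

namespace Matrix

variable {R : Type*} [CommRing R]

theorem det_updateCol_single_one {n : ℕ} (A : Matrix (Fin (n + 1)) (Fin (n + 1)) R)
    (i j : Fin (n + 1)) :
    (A.updateCol j (Pi.single i 1)).det
      = (-1) ^ (i.1 + j.1) * (A.submatrix i.succAbove j.succAbove).det := by
  rw [← det_transpose, ← updateRow_transpose, ← adjugate_apply,
    adjugate_fin_succ_eq_det_submatrix, ← det_transpose, transpose_submatrix, add_comm]
  rfl

theorem det_updateCol_updateCol_single_one [IsDomain R] {n : ℕ} (M : Matrix (Fin n) (Fin n) R)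
    (hM : M.det ≠ 0) {i₁ i₂ j₁ j₂ : Fin n} (hj : j₁ ≠ j₂) :
    M.det * ((M.updateCol j₁ (Pi.single i₁ 1)).updateCol j₂ (Pi.single i₂ 1)).det
      = M.adjugate j₁ i₁ * M.adjugate j₂ i₂ - M.adjugate j₂ i₁ * M.adjugate j₁ i₂ := by
  classical
  -- `M * B` is `M` with columns `j₁, j₂` replaced by `det M • e_{i₁}, det M • e_{i₂}`, while `B`
  -- is a rank-two perturbation of `1` whose determinant the Weinstein–Aronszajn identity computes.
  set B := ((1 : Matrix (Fin n) (Fin n) R).updateCol j₁ fun k => M.adjugate k i₁).updateCol j₂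
    fun k => M.adjugate k i₂
  have hMB : M * B = (M.updateCol j₁ (M.det • Pi.single i₁ 1)).updateCol j₂
      (M.det • Pi.single i₂ 1) := by
    have h (i : Fin n) : M *ᵥ (fun k => M.adjugate k i) = M.det • Pi.single i 1 := by
      ext k
      simpa [mulVec, dotProduct, mul_apply, one_apply, Pi.single_apply, eq_comm] using
        congr_fun (congr_fun M.mul_adjugate k) i
    rw [mul_updateCol, mul_updateCol, Matrix.mul_one, h, h]
  let U : Matrix (Fin n) (Fin 2) R :=
    of fun k => ![M.adjugate k i₁ - Pi.single (M := fun _ => R) j₁ 1 k,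
      M.adjugate k i₂ - Pi.single (M := fun _ => R) j₂ 1 k]
  let V : Matrix (Fin 2) (Fin n) R := of ![Pi.single j₁ 1, Pi.single j₂ (1 : R)]
  have hB : B = 1 + U * V := by
    ext k l
    simp only [B, U, V, updateCol_apply, one_apply, Pi.single_apply, add_apply, mul_apply, of_apply,
      cons_val', cons_val_fin_one, Fin.sum_univ_two, cons_val_zero, cons_val_one, mul_ite, mul_one,
      mul_zero]
    split_ifs <;> simp_all
  have hdetB : B.det
      = M.adjugate j₁ i₁ * M.adjugate j₂ i₂ - M.adjugate j₂ i₁ * M.adjugate j₁ i₂ := by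
    rw [hB, det_one_add_mul_comm, det_fin_two]
    simp [U, V, Pi.single_apply, hj, hj.symm, mul_comm]
  apply mul_left_cancel₀ hM
  rw [← hdetB, ← det_mul M B, hMB, det_updateCol_smul]
  conv_rhs => rw [updateCol_comm M hj, det_updateCol_smul, updateCol_comm M hj.symm]

theorem desnanot_jacobi [IsDomain R] {n : ℕ} (M : Matrix (Fin (n + 2)) (Fin (n + 2)) R)
    (hM : M.det ≠ 0) :
    M.det * (M.submatrix (Fin.castSucc ∘ Fin.castSucc) (Fin.castSucc ∘ Fin.succ)).det
      = (M.submatrix (Fin.last n).castSucc.succAbove Fin.succ).det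
          * (M.submatrix Fin.castSucc Fin.castSucc).det
        - (M.submatrix (Fin.last n).castSucc.succAbove Fin.castSucc).det
          * (M.submatrix Fin.castSucc Fin.succ).det := by
  have h := det_updateCol_updateCol_single_one M hM (i₁ := (Fin.last n).castSucc)
    (i₂ := Fin.last (n + 1)) (j₁ := 0) (j₂ := Fin.last (n + 1)) (by simp [Fin.ext_iff])
  have hsub : ((M.updateCol 0 (Pi.single (Fin.last n).castSucc 1)).submatrix Fin.castSucc
      Fin.castSucc) = (M.submatrix Fin.castSucc Fin.castSucc).updateCol 0
        (Pi.single (Fin.last n) 1) := by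
    ext k l
    simp [updateCol_apply, Pi.single_apply]
  rw [det_updateCol_single_one, Fin.succAbove_last, hsub, det_updateCol_single_one,
    submatrix_submatrix, adjugate_fin_succ_eq_det_submatrix, adjugate_fin_succ_eq_det_submatrix,
    adjugate_fin_succ_eq_det_submatrix, adjugate_fin_succ_eq_det_submatrix] at h
  simp only [Fin.succAbove_last, Fin.succAbove_zero, Fin.val_last, Fin.val_castSucc,
    Fin.val_zero] at h
  -- all the signs coming from the cofactor expansions equal `(-1) ^ n`
  obtain ⟨k, rfl | rfl⟩ := Nat.even_or_odd' n
  · simp only [pow_add, pow_mul, neg_one_sq] at h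
    linear_combination h
  · simp only [pow_add, pow_mul, neg_one_sq] at h
    linear_combination -h

end Matrix

theorem add_add_le_add_add {α : Type*} [AddCommMonoid α] [PartialOrder α] [IsOrderedAddMonoid α]
    {a b c d x y : α} (h : a + b ≤ c + d) : a + x + (b + y) ≤ c + x + (d + y) := by
  rw [add_add_add_comm, add_add_add_comm c]
  exact add_le_add_left h _

section Order

variable {R : Type*} [CommRing R] {t : R}

theorem min_ord_le_ord_sub (a b : R) : min (ord t a) (ord t b) ≤ ord t (a - b) := by
  simpa [ord, sub_eq_add_neg, emultiplicity_neg] using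
    min_le_emultiplicity_add (p := t) (a := a) (b := -b)

theorem ordZ_add_ordZ_le {x y z w : R} (hz : ord t z ≠ ⊤) (hw : ord t w ≠ ⊤)
    (h : ord t x + ord t y ≤ ord t z + ord t w) : ordZ t x + ordZ t y ≤ ordZ t z + ordZ t w := by
  have hfin {a : R} (ha : ord t a ≠ ⊤) : ord t a = multiplicity t a :=
    (finiteMultiplicity_iff_emultiplicity_ne_top.2 ha).emultiplicity_eq_multiplicity
  have hxy : ord t x + ord t y ≠ ⊤ := ne_top_of_le_ne_top (WithTop.add_ne_top.2 ⟨hz, hw⟩) h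
  rw [hfin (WithTop.add_ne_top.1 hxy).1, hfin (WithTop.add_ne_top.1 hxy).2, hfin hz, hfin hw] at h
  simp only [ordZ]
  exact_mod_cast h

variable [IsDomain R]

theorem ord_mul (ht : Prime t) (a b : R) : ord t (a * b) = ord t a + ord t b :=
  emultiplicity_mul ht

theorem ord_ne_top [WfDvdMonoid R] (ht : Prime t) {a : R} (ha : a ≠ 0) : ord t a ≠ ⊤ :=
  finiteMultiplicity_iff_emultiplicity_ne_top.1 (FiniteMultiplicity.of_prime_left ht ha)

theorem Matrix.ord_det_add_ord_det_le_of_desnanot_jacobi (ht : Prime t) {n : ℕ}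
    (M : Matrix (Fin (n + 2)) (Fin (n + 2)) R)
    (hA : ord t (M.submatrix Fin.castSucc Fin.castSucc).det
      ≤ ord t (M.submatrix (Fin.last n).castSucc.succAbove Fin.castSucc).det)
    (hB : ord t (M.submatrix Fin.castSucc Fin.succ).det
      ≤ ord t (M.submatrix (Fin.last n).castSucc.succAbove Fin.succ).det) :
    ord t (M.submatrix Fin.castSucc Fin.castSucc).det
        + ord t (M.submatrix Fin.castSucc Fin.succ).det
      ≤ ord t M.det
        + ord t (M.submatrix (Fin.castSucc ∘ Fin.castSucc) (Fin.castSucc ∘ Fin.succ)).det := by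
  by_cases hM : M.det = 0
  · simp [hM, ord]
  rw [← ord_mul ht M.det, desnanot_jacobi M hM]
  refine le_trans ?_ (min_ord_le_ord_sub _ _)
  rw [ord_mul ht, ord_mul ht]
  exact le_min (by rw [add_comm]; gcongr) (by gcongr)

end Order

section Triangular

variable {R : Type*} [CommRing R] {r : ℕ}

theorem UpperTri.mul {A B : Matrix (Fin r) (Fin r) R} (hA : UpperTri A) (hB : UpperTri B) :
    UpperTri (A * B) :=
  fun _ _ h =>
    Matrix.BlockTriangular.mul (b := id) (fun _ _ h => hA _ _ h) (fun _ _ h => hB _ _ h) h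

theorem UpperTri.det_submatrix_ne_zero [IsDomain R] {W : Matrix (Fin r) (Fin r) R}
    (hW : UpperTri W) (hdet : W.det ≠ 0) {k : ℕ} {f : Fin k → Fin r} (hf : StrictMono f) :
    (W.submatrix f f).det ≠ 0 := by
  rw [Matrix.det_of_isUpperTriangular (M := W.submatrix f f) fun _ _ h => hW _ _ (hf h)]
  rw [Matrix.det_of_isUpperTriangular (M := W) fun _ _ h => hW _ _ h] at hdet
  exact Finset.prod_ne_zero_iff.2 fun p _ =>
    Finset.prod_ne_zero_iff.1 hdet (f p) (Finset.mem_univ _)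

theorem lastCols_strictMono (s : ℕ) (h : s ≤ r) : StrictMono (lastCols r s h) :=
  fun p q hpq => Fin.mk_lt_mk.2 (by have : p.1 < q.1 := hpq; omega)

theorem strictMono_append_lastCols {a c : ℕ} {φ : Fin a → Fin r} (hφ : StrictMono φ)
    (hφc : ∀ p, φ p < c) : StrictMono (Fin.append φ (lastCols r (r - c) (Nat.sub_le r c))) := by
  intro x y hxy
  induction x using Fin.addCases with
  | left x =>
    induction y using Fin.addCases with
    | left y => simpa using hφ (show x < y from hxy)
    | right y =>
      have := hφc x
      simp only [Fin.append_left, Fin.append_right, lastCols, Fin.lt_def] at this ⊢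
      omega
  | right x =>
    induction y using Fin.addCases with
    | left y => simp only [Fin.lt_def, Fin.val_natAdd, Fin.val_castAdd] at hxy; omega
    | right y =>
      simp only [Fin.append_right, lastCols, Fin.lt_def, Fin.val_natAdd] at hxy ⊢
      omega

theorem append_lastCols_le {a c : ℕ} {φ ψ : Fin a → Fin r} (h : ∀ p, φ p ≤ ψ p)
    (x : Fin (a + (r - c))) :
    Fin.append φ (lastCols r (r - c) (Nat.sub_le r c)) x
      ≤ Fin.append ψ (lastCols r (r - c) (Nat.sub_le r c)) x := by
  induction x using Fin.addCases <;> simp [h]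

theorem UpperTri.det_submatrix_append_lastCols {W : Matrix (Fin r) (Fin r) R} (hW : UpperTri W)
    {a c : ℕ} (hac : a ≤ c) (hc : c ≤ r) (φ : Fin a → Fin r) :
    (W.submatrix (Fin.append φ (lastCols r (r - c) (Nat.sub_le r c)))
        (lastCols r (a + (r - c)) (by omega))).det
      = (W.submatrix φ (Fin.castLE hc ∘ lastCols c a hac)).det
        * (W.submatrix (lastCols r (r - c) (Nat.sub_le r c))
            (lastCols r (r - c) (Nat.sub_le r c))).det := by
  rw [← Matrix.det_submatrix_equiv_self finSumFinEquiv, Matrix.submatrix_submatrix,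
    ← Matrix.det_fromBlocks_zero₂₁ _ (W.submatrix φ (lastCols r (r - c) (Nat.sub_le r c)))]
  congr 1
  ext (x | x) (y | y)
  · simp only [Matrix.submatrix_apply, Function.comp_apply, finSumFinEquiv_apply_left,
      Fin.append_left, lastCols, Fin.val_castAdd, Matrix.fromBlocks_apply₁₁, Fin.castLE_mk]
    congr 2; omega
  · simp only [Matrix.submatrix_apply, Function.comp_apply, finSumFinEquiv_apply_left,
      finSumFinEquiv_apply_right, Fin.append_left, lastCols, Fin.val_natAdd,
      Matrix.fromBlocks_apply₁₂]
    congr 2; omega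
  · simp only [Matrix.submatrix_apply, Function.comp_apply, finSumFinEquiv_apply_left,
      finSumFinEquiv_apply_right, Fin.append_right, Matrix.fromBlocks_apply₂₁, Matrix.zero_apply]
    exact hW _ _ (by simp only [lastCols, Fin.val_castAdd, Fin.lt_def]; omega)
  · simp only [Matrix.submatrix_apply, Function.comp_apply, finSumFinEquiv_apply_right,
      Fin.append_right, lastCols, Fin.val_natAdd, Matrix.fromBlocks_apply₂₂]
    congr 2; omega

theorem lastCols_castSucc {c a : ℕ} (h : a + 1 ≤ c + 1) (q : Fin a) :
    lastCols (c + 1) (a + 1) h q.castSucc = (lastCols c a (by omega) q).castSucc := by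
  ext; simp [lastCols]

theorem lastCols_succ {c a : ℕ} (h : a + 1 ≤ c) (q : Fin a) :
    lastCols c (a + 1) h q.succ = lastCols c a (by omega) q := by
  ext; simp only [lastCols, Fin.val_succ]; omega

end Triangular

section RightJustifiedMinors

variable {R : Type*} [CommRing R] {r : ℕ}

theorem rsMinor_eq_det_submatrix (W : Matrix (Fin r) (Fin r) R) {s : Finset (Fin r)} {k : ℕ}
    {f : Fin k → Fin r} (hf : StrictMono f) (hs : Finset.univ.image f = s) (hk : k ≤ r) :
    rsMinor W s = (W.submatrix f (lastCols r k hk)).det := by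
  have hcard : s.card = k := by
    rw [← hs, Finset.card_image_of_injective _ hf.injective, Finset.card_fin]
  subst hcard
  rw [rsMinor, ← Finset.orderEmbOfFin_unique rfl
    (fun x => hs ▸ Finset.mem_image_of_mem f (Finset.mem_univ x)) hf]

theorem image_append_lastCols_eq_rowsSet {a c : ℕ} (hac : a ≤ c) (hc : c ≤ r) :
    Finset.univ.image (Fin.append (Fin.castLE (hac.trans hc))
      (lastCols r (r - c) (Nat.sub_le r c))) = rowsSet r a (c + 1) := by
  ext x
  simp only [Finset.mem_image, Finset.mem_univ, true_and, rowsSet, Finset.mem_filter]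
  constructor
  · rintro ⟨y, rfl⟩
    induction y using Fin.addCases with
    | left y => simp only [Fin.append_left, Fin.val_castLE]; omega
    | right y => simp only [Fin.append_right, lastCols]; omega
  · intro hx
    by_cases hxa : x.1 < a
    · exact ⟨Fin.castAdd _ ⟨x, hxa⟩, by rw [Fin.append_left]; rfl⟩
    · refine ⟨Fin.natAdd a ⟨x - c, by omega⟩, ?_⟩
      rw [Fin.append_right]
      ext
      simp only [lastCols]
      omega

theorem UpperTri.rsMinor_rowsSet {W : Matrix (Fin r) (Fin r) R} (hW : UpperTri W) {a c : ℕ}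
    (hac : a ≤ c) (hc : c ≤ r) :
    rsMinor W (rowsSet r a (c + 1))
      = (W.submatrix (Fin.castLE (hac.trans hc)) (Fin.castLE hc ∘ lastCols c a hac)).det
        * (W.submatrix (lastCols r (r - c) (Nat.sub_le r c))
            (lastCols r (r - c) (Nat.sub_le r c))).det := by
  have hrows := strictMono_append_lastCols (Fin.strictMono_castLE (hac.trans hc)) (c := c)
    fun p => by simp only [Fin.val_castLE]; omega
  rw [rsMinor_eq_det_submatrix W hrows (image_append_lastCols_eq_rowsSet hac hc) (by omega),
    hW.det_submatrix_append_lastCols hac hc]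

variable [IsDomain R] {t : R}

theorem UpperTri.dMinor_eq (ht : Prime t) {W : Matrix (Fin r) (Fin r) R} (hW : UpperTri W)
    {a c : ℕ} (hac : a ≤ c) (hc : c ≤ r) :
    dMinor t W a (c + 1)
      = ord t (W.submatrix (Fin.castLE (hac.trans hc)) (Fin.castLE hc ∘ lastCols c a hac)).det
        + ord t (W.submatrix (lastCols r (r - c) (Nat.sub_le r c))
            (lastCols r (r - c) (Nat.sub_le r c))).det := by
  rw [dMinor, hW.rsMinor_rowsSet hac hc, ord_mul ht]

end RightJustifiedMinors

section OrdMinorRowMonotone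

variable {R : Type*} [CommRing R] {r : ℕ}

def OrdMinorRowMonotone (t : R) (W : Matrix (Fin r) (Fin r) R) : Prop :=
  ∀ ⦃k : ℕ⦄ ⦃I I' J : Fin k → Fin r⦄, StrictMono I → StrictMono I' → StrictMono J →
    (∀ p, I p ≤ I' p) → ord t (W.submatrix I J).det ≤ ord t (W.submatrix I' J).det

variable [IsDomain R] [WfDvdMonoid R] {t : R} {W : Matrix (Fin r) (Fin r) R}

theorem OrdMinorRowMonotone.ord_det_submatrix_le (hmono : OrdMinorRowMonotone t W) (ht : Prime t)
    (hW : UpperTri W) (hdet : W.det ≠ 0) {a c : ℕ} (hac : a ≤ c) (hc : c ≤ r)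
    {φ ψ : Fin a → Fin r} (hφ : StrictMono φ) (hψ : StrictMono ψ) (hψc : ∀ p, ψ p < c)
    (hφψ : ∀ p, φ p ≤ ψ p) :
    ord t (W.submatrix φ (Fin.castLE hc ∘ lastCols c a hac)).det
      ≤ ord t (W.submatrix ψ (Fin.castLE hc ∘ lastCols c a hac)).det := by
  have h := @hmono (a + (r - c)) _ _ _
    (strictMono_append_lastCols hφ fun p => Nat.lt_of_le_of_lt (hφψ p) (hψc p))
    (strictMono_append_lastCols hψ hψc) (lastCols_strictMono (r := r) (a + (r - c)) (by omega))
    (append_lastCols_le hφψ)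
  rw [hW.det_submatrix_append_lastCols hac hc, hW.det_submatrix_append_lastCols hac hc,
    ord_mul ht, ord_mul ht] at h
  exact (WithTop.add_le_add_iff_right
    (ord_ne_top ht (hW.det_submatrix_ne_zero hdet (lastCols_strictMono _ _)))).1 h

theorem OrdMinorRowMonotone.dMinor_ne_top (hmono : OrdMinorRowMonotone t W) (ht : Prime t)
    (hW : UpperTri W) (hdet : W.det ≠ 0) {a c : ℕ} (hac : a ≤ c) (hc : c ≤ r) :
    dMinor t W a (c + 1) ≠ ⊤ := by
  have hcols : StrictMono (Fin.castLE hc ∘ lastCols c a hac) :=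
    (Fin.strictMono_castLE hc).comp (lastCols_strictMono a hac)
  rw [hW.dMinor_eq ht hac hc]
  refine WithTop.add_ne_top.2 ⟨ne_top_of_le_ne_top ?_ (hmono.ord_det_submatrix_le ht hW hdet hac hc
    (Fin.strictMono_castLE _) hcols (fun p => ?_) (fun p => ?_)),
    ord_ne_top ht (hW.det_submatrix_ne_zero hdet (lastCols_strictMono _ _))⟩
  · exact ord_ne_top ht (hW.det_submatrix_ne_zero hdet hcols)
  · simp only [Function.comp_apply, lastCols, Fin.castLE_mk]; omega
  · simp [Fin.le_def, lastCols]

theorem OrdMinorRowMonotone.ord_det_add_ord_det_le (hmono : OrdMinorRowMonotone t W)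
    (ht : Prime t) (hW : UpperTri W) (hdet : W.det ≠ 0) {m c : ℕ} (hmc : m + 1 ≤ c)
    (hc : c + 1 ≤ r) :
    ord t (W.submatrix (Fin.castLE (hmc.trans (by omega)))
        (Fin.castLE (by omega) ∘ lastCols c (m + 1) hmc)).det
      + ord t (W.submatrix (Fin.castLE (hmc.trans (by omega)))
        (Fin.castLE hc ∘ lastCols (c + 1) (m + 1) (by omega))).det
      ≤ ord t (W.submatrix (Fin.castLE (show m ≤ r by omega))
          (Fin.castLE (by omega) ∘ lastCols c m (by omega))).det
        + ord t (W.submatrix (Fin.castLE (show m + 2 ≤ r by omega))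
          (Fin.castLE hc ∘ lastCols (c + 1) (m + 2) (by omega))).det := by
  set V := W.submatrix (Fin.castLE (show m + 2 ≤ r by omega))
    (Fin.castLE hc ∘ lastCols (c + 1) (m + 2) (by omega))
  have hrows :
      StrictMono (Fin.castLE (show m + 2 ≤ r by omega) ∘ (Fin.last m).castSucc.succAbove) :=
    (Fin.strictMono_castLE _).comp (Fin.strictMono_succAbove _)
  have hrows_le (p : Fin (m + 1)) :
      Fin.castLE (show m + 1 ≤ r by omega) p
        ≤ (Fin.castLE (show m + 2 ≤ r by omega) ∘ (Fin.last m).castSucc.succAbove) p := by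
    simp only [Function.comp_apply, Fin.succAbove, Fin.lt_def, Fin.val_castSucc, Fin.val_last,
      Fin.le_def, Fin.val_castLE]
    split_ifs <;> simp
  have hrows_lt (p : Fin (m + 1)) :
      (Fin.castLE (show m + 2 ≤ r by omega) ∘ (Fin.last m).castSucc.succAbove) p < m + 2 :=
    ((Fin.last m).castSucc.succAbove p).isLt
  have hA : ord t (V.submatrix Fin.castSucc Fin.castSucc).det
      ≤ ord t (V.submatrix (Fin.last m).castSucc.succAbove Fin.castSucc).det := by
    simp only [V, Matrix.submatrix_submatrix, Function.comp_def, lastCols_castSucc,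
      Fin.castLE_castSucc]
    rcases (show m + 2 ≤ c ∨ c = m + 1 by omega) with hmc' | rfl
    · exact hmono.ord_det_submatrix_le ht hW hdet hmc (by omega) (Fin.strictMono_castLE _) hrows
        (fun p => (hrows_lt p).trans_le hmc') hrows_le
    · -- for `c = m + 1` the last row of this minor lies below the diagonal of `W`
      convert le_top
      rw [ord, Matrix.det_eq_zero_of_row_eq_zero (Fin.last m) fun q => hW _ _ (by
        simp only [lastCols, Fin.succAbove_castSucc_self, Fin.succ_last, Fin.lt_def,
          Fin.val_castLE, Fin.val_last]
        omega), emultiplicity_zero]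
  have hB : ord t (V.submatrix Fin.castSucc Fin.succ).det
      ≤ ord t (V.submatrix (Fin.last m).castSucc.succAbove Fin.succ).det := by
    simp only [V, Matrix.submatrix_submatrix, Function.comp_def, lastCols_succ,
      Fin.castLE_castSucc]
    exact hmono.ord_det_submatrix_le ht hW hdet (by omega) hc (Fin.strictMono_castLE _) hrows
      (fun p => (hrows_lt p).trans_le (by omega)) hrows_le
  have h := V.ord_det_add_ord_det_le_of_desnanot_jacobi ht hA hB
  rw [add_comm (ord t V.det)] at h
  simpa only [V, Matrix.submatrix_submatrix, Function.comp_def, lastCols_castSucc, lastCols_succ,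
    Fin.castLE_castSucc] using h

theorem OrdMinorRowMonotone.dMinor_add_dMinor_le (hmono : OrdMinorRowMonotone t W)
    (ht : Prime t) (hW : UpperTri W) (hdet : W.det ≠ 0) {i j : ℕ} (hi : 1 ≤ i) (hij : i ≤ j)
    (hj : j ≤ r) :
    dMinor t W (j - i) j + dMinor t W (j - i) (j + 1)
      ≤ dMinor t W (j - i - 1) j + dMinor t W (j - i + 1) (j + 1) := by
  obtain ⟨c, rfl⟩ : ∃ c, j = c + 1 := ⟨j - 1, by omega⟩
  generalize ha : c + 1 - i = a
  cases a with
  | zero =>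
    rw [Nat.zero_sub]
    gcongr
    rw [hW.dMinor_eq ht (a := 0) le_add_self hj, hW.dMinor_eq ht (a := 0 + 1) (by omega) hj,
      Matrix.det_isEmpty, ord, emultiplicity_of_one_right ht.not_isUnit, zero_add]
    exact le_add_self
  | succ m =>
    rw [Nat.add_sub_cancel, hW.dMinor_eq ht (a := m + 1) (c := c) (by omega) (by omega),
      hW.dMinor_eq ht (a := m + 1) (c := c + 1) (by omega) hj,
      hW.dMinor_eq ht (a := m) (c := c) (by omega) (by omega),
      hW.dMinor_eq ht (a := m + 1 + 1) (c := c + 1) (by omega) hj]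
    exact add_add_le_add_add (hmono.ord_det_add_ord_det_le ht hW hdet (by omega) hj)

theorem OrdMinorRowMonotone.zero_le_of_detFormula (hmono : OrdMinorRowMonotone t W)
    (ht : Prime t) (hW : UpperTri W) (hdet : W.det ≠ 0) {k : ℕ → ℕ → ℤ} (hk : DetFormula t W k)
    {i j : ℕ} (hi : 1 ≤ i) (hij : i ≤ j) (hj : j ≤ r) : 0 ≤ k i j := by
  obtain ⟨i, rfl⟩ : ∃ i', i = i' + 1 := ⟨i - 1, by omega⟩
  obtain ⟨c, rfl⟩ : ∃ c, j = c + 1 := ⟨j - 1, by omega⟩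
  -- the determinantal formula also holds for `i = 0`, both minors then being the full determinant
  have hprev : ∑ s ∈ Finset.Icc 1 i, k s (c + 1)
      = dMinorZ t W (c + 1 - (i + 1)) (c + 1) - dMinorZ t W (c + 1 - (i + 1) + 1) (c + 1 + 1) := by
    rcases Nat.eq_zero_or_pos i with rfl | hi0
    · have hrows : rowsSet r c (c + 1) = rowsSet r (c + 1) (c + 1 + 1) := by
        ext x; simp only [rowsSet, Finset.mem_filter, Finset.mem_univ, true_and]; omega
      simp [dMinorZ, hrows]
    · rw [hk i (c + 1) hi0 (by omega) hj, show c + 1 - i - 1 = c + 1 - (i + 1) by omega,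
        show c + 1 - i = c + 1 - (i + 1) + 1 by omega]
  have hcur := hk (i + 1) (c + 1) hi hij hj
  rw [Finset.sum_Icc_succ_top (by omega), hprev] at hcur
  have hkey : dMinorZ t W (c + 1 - (i + 1)) (c + 1) + dMinorZ t W (c + 1 - (i + 1)) (c + 1 + 1)
      ≤ dMinorZ t W (c + 1 - (i + 1) - 1) (c + 1)
        + dMinorZ t W (c + 1 - (i + 1) + 1) (c + 1 + 1) :=
    ordZ_add_ordZ_le (hmono.dMinor_ne_top ht hW hdet (by omega) (by omega))
      (hmono.dMinor_ne_top ht hW hdet (by omega) hj)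
      (hmono.dMinor_add_dMinor_le ht hW hdet hi hij hj)
  linarith

end OrdMinorRowMonotone

section MuGeneric

variable {R : Type*} [CommRing R] {r : ℕ} {t : R} {μ : ℕ → ℕ}
  {N Nstar : Matrix (Fin r) (Fin r) R}

theorem MuGenericVia.upperTri (h : MuGenericVia t r μ N Nstar) : UpperTri Nstar := by
  obtain ⟨QU, QL, TL, TU, -, -, rfl, hQU, -, -, -, hTU, -, -, -, hQLNTL, -⟩ := h
  simpa only [Matrix.mul_assoc] using (hQU.mul hQLNTL).mul hTU

theorem MuGenericVia.det_ne_zero [IsDomain R] (h : MuGenericVia t r μ N Nstar) (hN : N.det ≠ 0) :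
    Nstar.det ≠ 0 := by
  obtain ⟨QU, QL, TL, TU, -, -, rfl, -, hQU, -, hQL, -, hTU, -, hTL, -⟩ := h
  simp only [Matrix.det_mul]
  exact mul_ne_zero (mul_ne_zero (mul_ne_zero hQU.1.ne_zero hQL.1.ne_zero) hN)
    (mul_ne_zero hTL.ne_zero hTU.ne_zero)

theorem MuGenericVia.ordMinorRowMonotone (h : MuGenericVia t r μ N Nstar) :
    OrdMinorRowMonotone t Nstar := by
  obtain ⟨QU, QL, TL, TU, QhL, QhU, rfl, -, -, -, -, -, -, -, -, -, -, -, -, -, -, hE⟩ := h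
  intro k I I' J hI hI' hJ hII'
  have hk : k ≤ r := Fin.le_of_injective I hI.injective
  rw [(hE k hk I J hI hJ).1, (hE k hk I' J hI' hJ).1]
  exact sInf_le_sInf fun _ ⟨S, hS, hI'S, hm⟩ => ⟨S, hS, fun s => (hII' s).trans (hI'S s), hm⟩

end MuGeneric

theorem stmt13_general {R : Type*} [CommRing R] [IsDomain R] [IsDiscreteValuationRing R]
    (t : R) (ht : Irreducible t) (r : ℕ) (μ : ℕ → ℕ)
    (Nstar : Matrix (Fin r) (Fin r) R) (hgen : MuGeneric t r μ Nstar)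
    (k : ℕ → ℕ → ℤ) (hk : DetFormula t Nstar k)
    (i j : ℕ) (hi1 : 1 ≤ i) (hij : i ≤ j) (hjr : j ≤ r) :
    (dMinor t Nstar (j - i) j + dMinor t Nstar (j - i) (j + 1) ≤
      dMinor t Nstar (j - i - 1) j + dMinor t Nstar (j - i + 1) (j + 1)) ∧
    0 ≤ k i j := by
  obtain ⟨N, hN, hvia⟩ := hgen
  have hmono := hvia.ordMinorRowMonotone
  exact ⟨hmono.dMinor_add_dMinor_le ht.prime hvia.upperTri (hvia.det_ne_zero hN) hi1 hij hjr,
    hmono.zero_le_of_detFormula ht.prime hvia.upperTri (hvia.det_ne_zero hN) hk hi1 hij hjr⟩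

theorem stmt13 {R : Type*} [CommRing R] [IsDomain R] [IsDiscreteValuationRing R]
    [CharZero (IsLocalRing.ResidueField R)]
    (t : R) (ht : Irreducible t) (r : ℕ) (μ : ℕ → ℕ)
    (hμ : ∀ i, 1 ≤ i → i < r → μ (i + 1) ≤ μ i)
    (Nstar : Matrix (Fin r) (Fin r) R) (hgen : MuGeneric t r μ Nstar)
    (k : ℕ → ℕ → ℤ) (hk : DetFormula t Nstar k)
    (i j : ℕ) (hi1 : 1 ≤ i) (hij : i ≤ j) (hjr : j ≤ r) :
    (dMinor t Nstar (j - i) j + dMinor t Nstar (j - i) (j + 1) ≤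
      dMinor t Nstar (j - i - 1) j + dMinor t Nstar (j - i + 1) (j + 1)) ∧
    0 ≤ k i j :=
  stmt13_general t ht r μ Nstar hgen k hk i j hi1 hij hjr
end

section
/- Let Q be an r×r μ-admissible matrix and let I = (i_1,…,i_k) and H = (h_1,…,h_k) be index sets of length k ≤ r. Define the index set Min(I,H) = (m_1,…,m_k) by m_s = min(i_s, h_s). Then |μ_{Min(I,H)}| − |μ_I| ≤ ‖Q_{IH}‖. -/
open Matrix

/-! Admissibility says `t^{μ_i} Q_{ij} = P_{ij} t^{μ_j}`, so `t^{(μ_j - μ_i)⁺}` divides `Q_{ij}`.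
In the Leibniz expansion of `Q_{IH}` the term of `σ` is then divisible by
`t^{∑_s (μ_{h_s} - μ_{i_{σ s}})⁺}`. Since `μ` is non-increasing, `s ↦ μ_{i_s}` and `s ↦ μ_{h_s}`
monovary, and the rearrangement inequality (applied layer by layer to the indicators
`[j < μ_·]`) shows that this exponent is smallest for `σ = id`. There it equals
`|μ_{Min(I,H)}| - |μ_I|`, because `μ_{min(i,h)} = max(μ_i, μ_h)`. -/

open Finset

lemma min_eq_sum_range_indicator_mul {x y N : ℕ} (hy : y ≤ N) :
    min x y = ∑ j ∈ range N, (if j < x then 1 else 0) * (if j < y then 1 else 0) := by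
  simp_rw [ite_zero_mul_ite_zero, one_mul, ← lt_min_iff, sum_boole, Nat.cast_id]
  have hfilter : (range N).filter (· < min x y) = range (min x y) := by
    ext j
    simp only [mem_filter, mem_range]
    omega
  rw [hfilter, card_range]

lemma Monovary.indicator_lt {ι : Type*} {a b : ι → ℕ} (h : Monovary a b) (j : ℕ) :
    Monovary (fun i => if j < a i then 1 else 0 : ι → ℕ) (fun i => if j < b i then 1 else 0) := by
  intro i i' hlt
  dsimp only at hlt ⊢
  have := h (show b i < b i' by split_ifs at hlt <;> omega)
  split_ifs <;> omega

lemma Monovary.sum_min_comp_perm_le_sum_min {ι : Type*} [Fintype ι] {a b : ι → ℕ}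
    (h : Monovary a b) (σ : Equiv.Perm ι) :
    ∑ i, min (a (σ i)) (b i) ≤ ∑ i, min (a i) (b i) := by
  have hb : ∀ i, b i ≤ ∑ i, b i := fun i =>
    single_le_sum (fun i _ => Nat.zero_le (b i)) (mem_univ i)
  simp_rw [min_eq_sum_range_indicator_mul (hb _)]
  rw [sum_comm, sum_comm (s := univ)]
  exact sum_le_sum fun j _ => (h.indicator_lt j).sum_comp_perm_mul_le_sum_mul

lemma Monovary.sum_tsub_le_sum_tsub_comp_perm {ι : Type*} [Fintype ι] {a b : ι → ℕ}
    (h : Monovary a b) (σ : Equiv.Perm ι) :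
    ∑ i, (b i - a i) ≤ ∑ i, (b i - a (σ i)) := by
  have hsub : ∀ c : ι → ℕ, ∑ i, (b i - c i) = ∑ i, b i - ∑ i, min (c i) (b i) := fun c => by
    rw [← sum_tsub_distrib _ fun i _ => min_le_right _ _]
    exact sum_congr rfl fun i _ => by omega
  rw [hsub, hsub fun i => a (σ i)]
  exact tsub_le_tsub_left (h.sum_min_comp_perm_le_sum_min σ) _

lemma Matrix.pow_dvd_det_of_pow_dvd_apply {n R : Type*} [DecidableEq n] [Fintype n] [CommRing R]
    {A : Matrix n n R} {t : R} (e : n → n → ℕ) (he : ∀ i j, t ^ e i j ∣ A i j) {m : ℕ}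
    (hm : ∀ σ : Equiv.Perm n, m ≤ ∑ i, e (σ i) i) : t ^ m ∣ A.det := by
  rw [Matrix.det_apply]
  refine dvd_sum fun σ _ => ?_
  have hprod : t ^ ∑ i, e (σ i) i ∣ ∏ i, A (σ i) i := by
    rw [← prod_pow_eq_pow_sum]
    exact prod_dvd_prod_of_dvd _ _ fun i _ => he (σ i) i
  exact dvd_smul_of_dvd _ ((pow_dvd_pow t (hm σ)).trans hprod)

lemma antitone_fin_of_succ_le {r : ℕ} {μ : ℕ → ℕ} (hμ : ∀ i, 1 ≤ i → i < r → μ (i + 1) ≤ μ i) :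
    Antitone fun i : Fin r => μ (i.1 + 1) := by
  have step : ∀ (i d : ℕ), i + d < r → μ (i + d + 1) ≤ μ (i + 1) := by
    intro i d
    induction d with
    | zero => simp
    | succ d ih => exact fun h => (hμ _ (by omega) (by omega)).trans (ih (by omega))
  intro i j hij
  obtain ⟨d, hd⟩ := Nat.exists_eq_add_of_le (Fin.le_def.mp hij)
  simpa only [← hd] using step i.1 d (hd ▸ j.2)

lemma wt_min_tsub_wt {r k : ℕ} {μ : ℕ → ℕ} (hμ : Antitone fun i : Fin r => μ (i.1 + 1))
    (I H : Fin k → Fin r) :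
    wt r μ (fun s => min (I s) (H s)) - wt r μ I = ∑ s, (μ ((H s).1 + 1) - μ ((I s).1 + 1)) := by
  rw [wt, wt, ← sum_tsub_distrib _ fun s _ => hμ.map_min ▸ le_max_left _ _]
  refine sum_congr rfl fun s _ => ?_
  rw [hμ.map_min (a := I s)]
  omega

lemma MuAdmissible.pow_dvd_apply {R : Type*} [CommRing R] [IsDomain R] {t : R} {r : ℕ}
    {μ : ℕ → ℕ} (ht : t ≠ 0) {Q : Matrix (Fin r) (Fin r) R}
    (hQ : MuAdmissible t r μ Q) (i j : Fin r) : t ^ (μ (j.1 + 1) - μ (i.1 + 1)) ∣ Q i j := by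
  obtain ⟨-, P, hP⟩ := hQ
  have hij : t ^ μ (i.1 + 1) * Q i j = P i j * t ^ μ (j.1 + 1) := by
    simpa [Dmu, Matrix.diagonal_mul, Matrix.mul_diagonal] using congrFun (congrFun hP i) j
  rcases le_total (μ (j.1 + 1)) (μ (i.1 + 1)) with h | h
  · simp [Nat.sub_eq_zero_of_le h]
  · refine ⟨P i j, mul_left_cancel₀ (pow_ne_zero (μ (i.1 + 1)) ht) ?_⟩
    rw [hij, ← pow_sub_mul_pow t h]
    ring

theorem stmt16_general {R : Type*} [CommRing R] [IsDomain R]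
    (t : R) (ht : Irreducible t) (r : ℕ) (μ : ℕ → ℕ)
    (hμ : ∀ i, 1 ≤ i → i < r → μ (i + 1) ≤ μ i)
    (Q : Matrix (Fin r) (Fin r) R) (hQ : MuAdmissible t r μ Q)
    (k : ℕ) (I H : Fin k → Fin r)
    (hI : StrictMono I) (hH : StrictMono H) :
    ((wt r μ (fun s => min (I s) (H s)) - wt r μ I : ℕ) : ℕ∞) ≤
      ord t (Q.submatrix I H).det := by
  have hanti := antitone_fin_of_succ_le hμ
  have hmonovary : Monovary (fun s => μ ((I s).1 + 1)) (fun s => μ ((H s).1 + 1)) :=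
    (hanti.comp_monotone hI.monotone).monovary (hanti.comp_monotone hH.monotone)
  refine le_emultiplicity_of_pow_dvd (Matrix.pow_dvd_det_of_pow_dvd_apply _
    (fun i j => hQ.pow_dvd_apply ht.ne_zero (I i) (H j)) fun σ => ?_)
  rw [wt_min_tsub_wt hanti]
  exact hmonovary.sum_tsub_le_sum_tsub_comp_perm σ

theorem stmt16 {R : Type*} [CommRing R] [IsDomain R] [IsDiscreteValuationRing R]
    [CharZero (IsLocalRing.ResidueField R)]
    (t : R) (ht : Irreducible t) (r : ℕ) (μ : ℕ → ℕ)
    (hμ : ∀ i, 1 ≤ i → i < r → μ (i + 1) ≤ μ i)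
    (Q : Matrix (Fin r) (Fin r) R) (hQ : MuAdmissible t r μ Q)
    (k : ℕ) (hkr : k ≤ r) (I H : Fin k → Fin r)
    (hI : StrictMono I) (hH : StrictMono H) :
    ((wt r μ (fun s => min (I s) (H s)) - wt r μ I : ℕ) : ℕ∞) ≤
      ord t (Q.submatrix I H).det :=
  stmt16_general t ht r μ hμ Q hQ k I H hI hH
end

section
/- Let μ = (6,3,1), D_μ = diag(t^6, t^3, t), and consider the 3×3 matrices over R given by N = [[t^8, t^7, t^4], [0, t^9, 2·t^6], [0, 0, t^7]] and N' = [[t^8, t^7, t^4], [0, t^9, 4·t^6], [0, 0, 3·t^7]]. Then the pairs (D_μ, N) and (D_μ, N') are not pair equivalent: there exists no triple (P, Q, T) ∈ GL_3(R)^3 such that P·D_μ·Q^{-1} = D_μ and Q·N·T^{-1} = N'. -/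
open Matrix

/-
Comparing entries in `P·D = D·Q` shows that `Q` is upper triangular modulo `t`: below the
diagonal `Q i j = t ^ (μ j - μ i) * P i j`. The entries of
`Q * familyN t a b = familyN t a' b' * T` in positions (3,2), (3,3), (2,2), then (1,2), (1,3),
(2,3), each divided by the largest available power of `t`, give modulo `t`
`b' Q₁₁ ≡ b' Q₂₂`, `b' Q₁₁ ≡ b Q₃₃`, `a b' Q₂₂ ≡ a' b Q₃₃`, hence `(a - a') b' Q₂₂ ≡ 0`.
If `b'` and `a - a'` are nonzero modulo `t`, then `Q₂₂ ≡ 0`, so `det Q ≡ Q₁₁ Q₂₂ Q₃₃ ≡ 0` and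
`Q` is not invertible. The theorem is the case `(a, b, a', b') = (2, 1, 4, 3)`, where `3` and
`2 - 4` are nonzero in a residue field of characteristic zero.
-/

theorem eq_pow_mul_of_mul_diagonal_pow {R n : Type*} [CommRing R] [IsDomain R] [Fintype n]
    [DecidableEq n] {t : R} (ht : t ≠ 0) {m : n → ℕ} {P Q : Matrix n n R}
    (h : P * diagonal (fun i => t ^ m i) = diagonal (fun i => t ^ m i) * Q) {i j : n}
    (hij : m i ≤ m j) : Q i j = t ^ (m j - m i) * P i j := by
  have hij' := congrFun₂ h i j
  rw [mul_diagonal, diagonal_mul] at hij'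
  apply mul_left_cancel₀ (pow_ne_zero (m i) ht)
  rw [← hij', ← mul_assoc, ← pow_add, Nat.add_sub_cancel' hij, mul_comm]

def familyN {R : Type*} [CommRing R] (t a b : R) : Matrix (Fin 3) (Fin 3) R :=
  !![t ^ 8, t ^ 7, t ^ 4; 0, t ^ 9, a * t ^ 6; 0, 0, b * t ^ 7]

theorem familyN_congr {R : Type*} [CommRing R] [IsDomain R] {t a b a' b' x y z : R}
    (ht : t ≠ 0) {Q T : Matrix (Fin 3) (Fin 3) R}
    (hQ10 : Q 1 0 = t ^ 3 * x) (hQ20 : Q 2 0 = t ^ 5 * y) (hQ21 : Q 2 1 = t ^ 2 * z)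
    (h : Q * familyN t a b = familyN t a' b' * T) :
    t ∣ b' * (Q 0 0 - Q 1 1) ∧ t ∣ b' * Q 0 0 - b * Q 2 2 ∧
      t ∣ a * b' * Q 1 1 - a' * b * Q 2 2 := by
  have entry : ∀ i j, (Q * familyN t a b) i j = (familyN t a' b' * T) i j := fun i j => by rw [h]
  have f01 := entry 0 1
  have f02 := entry 0 2
  have f11 := entry 1 1
  have f12 := entry 1 2
  have f21 := entry 2 1
  have f22 := entry 2 2
  simp only [familyN, mul_apply, of_apply, cons_val', cons_val_one, cons_val_zero,
    cons_val_fin_one, Fin.sum_univ_three, cons_val, mul_zero, add_zero, zero_mul, zero_add]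
    at f01 f02 f11 f12 f21 f22
  set s := t * y + z
  set u := t * y + a * z
  have hT21 : b' * T 2 1 = t ^ 4 * s :=
    mul_left_cancel₀ (pow_ne_zero 7 ht) (by linear_combination -f21 + t ^ 7 * hQ20 + t ^ 9 * hQ21)
  have hT22 : b' * T 2 2 = t * u + b * Q 2 2 :=
    mul_left_cancel₀ (pow_ne_zero 7 ht)
      (by linear_combination -f22 + t ^ 4 * hQ20 + a * t ^ 6 * hQ21)
  have hT11 : b' * T 1 1 = b' * (t * x + Q 1 1) - a' * t * s :=
    mul_left_cancel₀ (pow_ne_zero 9 ht)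
      (by linear_combination -b' * f11 + b' * t ^ 7 * hQ10 - a' * t ^ 6 * hT21)
  refine ⟨⟨b' * T 0 1 + b' * x + (1 - a') * s - b' * t * Q 0 1, ?_⟩,
    ⟨b' * t ^ 3 * T 0 2 + b' * t ^ 2 * T 1 2 + u - a * b' * t * Q 0 1 - b * b' * t ^ 2 * Q 0 2, ?_⟩,
    ⟨b' * t ^ 2 * T 1 2 + a' * u - b' * x - b * b' * Q 1 2, ?_⟩⟩
  · exact mul_left_cancel₀ (pow_ne_zero 7 ht)
      (by linear_combination b' * f01 + t ^ 7 * hT11 + t ^ 4 * hT21)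
  · exact mul_left_cancel₀ (pow_ne_zero 4 ht) (by linear_combination b' * f02 + t ^ 4 * hT22)
  · exact mul_left_cancel₀ (pow_ne_zero 6 ht)
      (by linear_combination b' * f12 - b' * t ^ 4 * hQ10 + a' * t ^ 6 * hT22)

theorem not_pairEquiv_familyN {R K : Type*} [CommRing R] [IsDomain R] [CommRing K] [IsDomain K]
    {t : R} (ht : t ≠ 0) (φ : R →+* K) (hφt : φ t = 0) {a b a' b' : R} (hb' : φ b' ≠ 0)
    (ha : φ a ≠ φ a') :
    ¬ PairEquiv (diagonal fun i => t ^ ![6, 3, 1] i) (familyN t a b)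
      (diagonal fun i => t ^ ![6, 3, 1] i) (familyN t a' b') := by
  rintro ⟨P, Q, T, -, hQ, -, hPQ, hQT⟩
  have hQ10 : Q 1 0 = t ^ 3 * P 1 0 := eq_pow_mul_of_mul_diagonal_pow ht hPQ (by decide)
  have hQ20 : Q 2 0 = t ^ 5 * P 2 0 := eq_pow_mul_of_mul_diagonal_pow ht hPQ (by decide)
  have hQ21 : Q 2 1 = t ^ 2 * P 2 1 := eq_pow_mul_of_mul_diagonal_pow ht hPQ (by decide)
  have hφ : ∀ {X : R}, t ∣ X → φ X = 0 := fun h => zero_dvd_iff.1 (hφt ▸ map_dvd φ h)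
  obtain ⟨h01, h02, h12⟩ := familyN_congr ht hQ10 hQ20 hQ21 hQT
  replace h01 := hφ h01
  replace h02 := hφ h02
  replace h12 := hφ h12
  simp only [map_mul, map_sub] at h01 h02 h12
  have hQ11 : φ (Q 1 1) = 0 := by
    have : (φ a - φ a') * φ b' * φ (Q 1 1) = 0 := by
      linear_combination h12 - φ a' * h02 + φ a' * h01
    simpa [sub_ne_zero.2 ha, hb'] using this
  have hdet : φ Q.det = φ (Q 0 0) * φ (Q 1 1) * φ (Q 2 2) := by
    rw [det_fin_three, hQ10, hQ20, hQ21]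
    simp [hφt]
  exact (hQ.map φ).ne_zero (by rw [hdet, hQ11, mul_zero, zero_mul])

theorem stmt19 {R : Type*} [CommRing R] [IsDomain R] [IsDiscreteValuationRing R]
    [CharZero (IsLocalRing.ResidueField R)]
    (t : R) (ht : Irreducible t) :
    ¬ PairEquiv
      (Dmu t 3 (fun i => if i = 1 then 6 else if i = 2 then 3 else 1))
      (!![t ^ 8, t ^ 7, t ^ 4; 0, t ^ 9, 2 * t ^ 6; 0, 0, t ^ 7])
      (Dmu t 3 (fun i => if i = 1 then 6 else if i = 2 then 3 else 1))
      (!![t ^ 8, t ^ 7, t ^ 4; 0, t ^ 9, 4 * t ^ 6; 0, 0, 3 * t ^ 7]) := by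
  have hD : Dmu t 3 (fun i => if i = 1 then 6 else if i = 2 then 3 else 1) =
      diagonal fun i => t ^ ![6, 3, 1] i := by
    unfold Dmu
    congr 1
    funext i
    fin_cases i <;> rfl
  have hN : !![t ^ 8, t ^ 7, t ^ 4; 0, t ^ 9, 2 * t ^ 6; 0, 0, t ^ 7] = familyN t 2 1 := by
    rw [familyN, one_mul]
  rw [hD, hN]
  refine not_pairEquiv_familyN ht.ne_zero (IsLocalRing.residue R)
    ((IsLocalRing.residue_eq_zero_iff t).2 ht.not_isUnit) ?_ ?_ <;>
    simp only [map_ofNat] <;> norm_num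
end
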